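/- arXiv:2412.17261 — 10 statements merged into one kernel-verified Lean document; each statement's English description precedes it below -/
import Mathlib

section
/- Let l1, l2, l3 be positive integers, l = lcm(l1,l2,l3), s1 = l/l1, s2 = l/l2, s3 = l/l3. Then gcd(s1, s2) = l3 / gcd(l3, lcm(l1, l2)). -/
lemma gcd_div_div (a b l : ℕ) (ha : 0 < a) (hb : 0 < b) (hal : a ∣ l) (hbl : b ∣ l) :
    Nat.gcd (l / a) (l / b) = l / Nat.lcm a b := by
  have hg : 0 < Nat.gcd a b := Nat.gcd_pos_of_pos_left _ ha
  have h1 : l / a = l * b / (a * b) := by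
    rw [Nat.mul_div_mul_right _ _ hb]
  have h2 : l / b = l * a / (a * b) := by
    rw [mul_comm a b, Nat.mul_div_mul_right _ _ ha]
  have hd1 : a * b ∣ l * b := Nat.mul_dvd_mul hal dvd_rfl
  have hd2 : a * b ∣ l * a := by rw [mul_comm a b]; exact Nat.mul_dvd_mul hbl dvd_rfl
  have hlcm : Nat.lcm a b ∣ l := Nat.lcm_dvd hal hbl
  rw [h1, h2, Nat.gcd_div hd1 hd2, Nat.gcd_mul_left, Nat.gcd_comm b a,
    ← Nat.gcd_mul_lcm a b, mul_comm (Nat.gcd a b) (Nat.lcm a b),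
    ← Nat.div_div_eq_div_mul, mul_comm l (Nat.gcd a b),
    Nat.mul_div_assoc _ hlcm, Nat.mul_div_cancel_left _ hg]

theorem stmt_3 (l1 l2 l3 : ℕ) (h1 : 0 < l1) (h2 : 0 < l2) (h3 : 0 < l3)
    (l : ℕ) (hl : l = Nat.lcm (Nat.lcm l1 l2) l3) :
    Nat.gcd (l / l1) (l / l2) = l3 / Nat.gcd l3 (Nat.lcm l1 l2) := by
  have hL : 0 < Nat.lcm l1 l2 := Nat.lcm_pos h1 h2
  have hal : l1 ∣ l := hl ▸ (Nat.dvd_lcm_left l1 l2).trans (Nat.dvd_lcm_left _ _)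
  have hbl : l2 ∣ l := hl ▸ (Nat.dvd_lcm_right l1 l2).trans (Nat.dvd_lcm_left _ _)
  rw [gcd_div_div l1 l2 l h1 h2 hal hbl, hl]
  -- lcm L l3 / L = l3 / gcd l3 L
  set L := Nat.lcm l1 l2
  have hg : 0 < Nat.gcd l3 L := Nat.gcd_pos_of_pos_left _ h3
  have hgd : Nat.gcd l3 L ∣ l3 := Nat.gcd_dvd_left _ _
  rw [Nat.lcm, Nat.gcd_comm L l3, mul_comm L l3]
  rw [mul_comm l3 L, Nat.mul_div_assoc L hgd, Nat.mul_div_cancel_left _ hL]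
end

section
/- Let l1, l2, l3 be positive integers, l = lcm(l1,l2,l3), si = l/li for i=1,2,3, and let k1, k2, k3 be integers with gcd(k1, l1) = gcd(k2, l2) = 1 and gcd(k3, l3) = 1. Then gcd(gcd(s1*k1, s2*k2, s3*k3), l) = 1. -/
/-!
Let `p` be a prime dividing `l`. The exponent of `p` in `l = lcm(l₁, l₂, l₃)` is attained by some
`lᵢ`; then `p ∣ lᵢ`, so `p ∤ kᵢ`, while `p ∤ l / lᵢ`. Hence `p` does not divide `(l / lᵢ) * kᵢ`.
-/

lemma Nat.factorization_lcm_eq_or {a b : ℕ} (p : ℕ) (ha : a ≠ 0) (hb : b ≠ 0) :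
    (a.lcm b).factorization p = a.factorization p ∨
      (a.lcm b).factorization p = b.factorization p := by
  rw [Nat.factorization_lcm ha hb, Finsupp.sup_apply]
  exact max_choice _ _

lemma Nat.Prime.not_dvd_div_of_factorization_eq {p d n : ℕ} (hp : p.Prime) (hd : d ∣ n)
    (hn : n ≠ 0) (h : n.factorization p = d.factorization p) : ¬ p ∣ n / d := by
  have hzero : (n / d).factorization p = 0 := by
    rw [Nat.factorization_div hd, Finsupp.tsub_apply, h, tsub_self]
  have hnd : n / d ≠ 0 := (Nat.div_ne_zero_iff_of_dvd hd).2 ⟨hn, ne_zero_of_dvd_ne_zero hn hd⟩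
  rw [Nat.factorization_eq_zero_iff] at hzero
  tauto

lemma Nat.Prime.not_dvd_div_mul_of_factorization_eq {p d n : ℕ} {k : ℤ} (hp : p.Prime)
    (hd : d ∣ n) (hn : n ≠ 0) (hk : Int.gcd k d = 1)
    (h : n.factorization p = d.factorization p) (hpn : p ∣ n) :
    ¬ (p : ℤ) ∣ (n / d : ℕ) * k := by
  have hpd : p ∣ d := by
    rwa [hp.dvd_iff_one_le_factorization hn, h,
      ← hp.dvd_iff_one_le_factorization (ne_zero_of_dvd_ne_zero hn hd)] at hpn
  intro hpk
  rcases Int.Prime.dvd_mul' hp hpk with hps | hpk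
  · exact hp.not_dvd_div_of_factorization_eq hd hn h (Int.natCast_dvd_natCast.mp hps)
  · have hpgcd : p ∣ Int.gcd k d := Int.dvd_gcd_iff.2 ⟨hpk, Int.natCast_dvd_natCast.2 hpd⟩
    rw [hk] at hpgcd
    exact hp.not_dvd_one hpgcd

theorem stmt_4 (l1 l2 l3 : ℕ) (h1 : 0 < l1) (h2 : 0 < l2) (h3 : 0 < l3)
    (l : ℕ) (hl : l = Nat.lcm (Nat.lcm l1 l2) l3)
    (k1 k2 k3 : ℤ)
    (hk1 : Int.gcd k1 (l1 : ℤ) = 1) (hk2 : Int.gcd k2 (l2 : ℤ) = 1)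
    (hk3 : Int.gcd k3 (l3 : ℤ) = 1) :
    Int.gcd (Int.gcd (Int.gcd ((l / l1 : ℕ) * k1) ((l / l2 : ℕ) * k2))
      ((l / l3 : ℕ) * k3)) (l : ℤ) = 1 := by
  have h12 : l1.lcm l2 ≠ 0 := Nat.lcm_ne_zero h1.ne' h2.ne'
  have hl0 : l ≠ 0 := hl ▸ Nat.lcm_ne_zero h12 h3.ne'
  have hd1 : l1 ∣ l := hl ▸ (Nat.dvd_lcm_left l1 l2).trans (Nat.dvd_lcm_left _ _)
  have hd2 : l2 ∣ l := hl ▸ (Nat.dvd_lcm_right l1 l2).trans (Nat.dvd_lcm_left _ _)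
  have hd3 : l3 ∣ l := hl ▸ Nat.dvd_lcm_right _ _
  refine Nat.eq_one_iff_not_exists_prime_dvd.2 fun p hp hpd => ?_
  obtain ⟨hp123, hpl⟩ := Int.dvd_gcd_iff.1 hpd
  obtain ⟨hp12, hp3⟩ := Int.dvd_coe_gcd_iff.1 hp123
  obtain ⟨hp1, hp2⟩ := Int.dvd_coe_gcd_iff.1 hp12
  replace hpl : p ∣ l := Int.natCast_dvd_natCast.mp hpl
  rcases Nat.factorization_lcm_eq_or p h12 h3.ne' with h | h
  · rcases Nat.factorization_lcm_eq_or p h1.ne' h2.ne' with h' | h'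
    · exact hp.not_dvd_div_mul_of_factorization_eq hd1 hl0 hk1 (hl ▸ h.trans h') hpl hp1
    · exact hp.not_dvd_div_mul_of_factorization_eq hd2 hl0 hk2 (hl ▸ h.trans h') hpl hp2
  · exact hp.not_dvd_div_mul_of_factorization_eq hd3 hl0 hk3 (hl ▸ h) hpl hp3
end

section
/- Let l1, l2, l3 be positive integers, l = lcm(l1,l2,l3), s1 = l/l1, s2 = l/l2, and k1, k2 integers with gcd(k1,l1) = gcd(k2,l2) = 1. Then gcd(s1*k1*s2*k2, l) = lcm(s1,s2) * gcd(gcd(s1,s2), gcd(l1,l2)). -/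
/-!
Write `sᵢ = l / lᵢ`, so `sᵢ * lᵢ = l`. Since `k₁` is coprime to `l₁`, it can be dropped from
`gcd (s₁ k₁ s₂ k₂) (s₁ l₁) = s₁ · gcd (k₁ s₂ k₂) l₁`, and likewise `k₂`; hence the left side is
`gcd (s₁ s₂) l`. Moreover `s₁ s₂ · gcd l₁ l₂ = gcd (s₂ l) (s₁ l) = l · gcd s₁ s₂`, i.e.
`l = lcm s₁ s₂ · gcd l₁ l₂`, and `s₁ s₂ = gcd s₁ s₂ · lcm s₁ s₂`; pulling out `lcm s₁ s₂` gives the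
right side.
-/

namespace Nat

theorem gcd_mul_mul_left_of_coprime {s n a x : ℕ} (ha : a.Coprime n) :
    gcd (s * a * x) (s * n) = gcd (s * x) (s * n) := by
  rw [mul_assoc, gcd_mul_left, gcd_mul_left, ha.gcd_mul_left_cancel]

theorem gcd_mul_lcm_eq_of_mul_eq {s₁ s₂ l₁ l₂ l : ℕ} (h₁ : s₁ * l₁ = l) (h₂ : s₂ * l₂ = l)
    (hl : l ≠ 0) : gcd l₁ l₂ * lcm s₁ s₂ = l := by
  have hg : 0 < gcd s₁ s₂ :=
    gcd_pos_of_pos_left _ (pos_of_ne_zero (left_ne_zero_of_mul (h₁ ▸ hl)))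
  apply Nat.eq_of_mul_eq_mul_left hg
  calc gcd s₁ s₂ * (gcd l₁ l₂ * lcm s₁ s₂) = s₁ * s₂ * gcd l₁ l₂ := by
        rw [mul_left_comm, gcd_mul_lcm, mul_comm]
    _ = gcd (s₂ * (s₁ * l₁)) (s₁ * (s₂ * l₂)) := by
        rw [← gcd_mul_left]; ring_nf
    _ = gcd s₁ s₂ * l := by
        rw [h₁, h₂, gcd_mul_right, gcd_comm]

theorem gcd_div_mul_mul_div_mul_of_coprime {l₁ l₂ l a b : ℕ} (h₁ : l₁ ∣ l) (h₂ : l₂ ∣ l)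
    (ha : a.Coprime l₁) (hb : b.Coprime l₂) :
    gcd (l / l₁ * a * (l / l₂) * b) l =
      lcm (l / l₁) (l / l₂) * gcd (gcd (l / l₁) (l / l₂)) (gcd l₁ l₂) := by
  rcases eq_or_ne l 0 with rfl | hl
  · simp
  have e₁ : l / l₁ * l₁ = l := Nat.div_mul_cancel h₁
  have e₂ : l / l₂ * l₂ = l := Nat.div_mul_cancel h₂
  set s₁ := l / l₁
  set s₂ := l / l₂
  have drop_a : gcd (s₁ * a * s₂ * b) l = gcd (s₁ * s₂ * b) l := by
    rw [← e₁, mul_assoc _ s₂, mul_assoc s₁ s₂, gcd_mul_mul_left_of_coprime ha]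
  have drop_b : gcd (s₁ * s₂ * b) l = gcd (s₁ * s₂) l := by
    rw [← e₂, mul_comm s₁, mul_right_comm, gcd_mul_mul_left_of_coprime hb]
  rw [drop_a, drop_b, ← gcd_mul_lcm s₁ s₂, ← gcd_mul_lcm_eq_of_mul_eq e₁ e₂ hl,
    mul_comm _ (lcm _ _), mul_comm (gcd l₁ l₂), gcd_mul_left]

end Nat

theorem stmt_5_general (l1 l2 l3 : ℕ)
    (l : ℕ) (hl : l = Nat.lcm (Nat.lcm l1 l2) l3)
    (k1 k2 : ℤ)
    (hk1 : Int.gcd k1 (l1 : ℤ) = 1) (hk2 : Int.gcd k2 (l2 : ℤ) = 1) :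
    Int.gcd (((l / l1 : ℕ) : ℤ) * k1 * ((l / l2 : ℕ) : ℤ) * k2) (l : ℤ) =
      Nat.lcm (l / l1) (l / l2) *
        Nat.gcd (Nat.gcd (l / l1) (l / l2)) (Nat.gcd l1 l2) := by
  have hd1 : l1 ∣ l := hl ▸ (Nat.dvd_lcm_left l1 l2).trans (Nat.dvd_lcm_left _ l3)
  have hd2 : l2 ∣ l := hl ▸ (Nat.dvd_lcm_right l1 l2).trans (Nat.dvd_lcm_left _ l3)
  rw [Int.gcd_eq_natAbs] at hk1 hk2 ⊢
  simpa only [Int.natAbs_mul, Int.natAbs_natCast] using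
    Nat.gcd_div_mul_mul_div_mul_of_coprime hd1 hd2 (a := k1.natAbs) (b := k2.natAbs) hk1 hk2

theorem stmt_5 (l1 l2 l3 : ℕ) (h1 : 0 < l1) (h2 : 0 < l2) (h3 : 0 < l3)
    (l : ℕ) (hl : l = Nat.lcm (Nat.lcm l1 l2) l3)
    (k1 k2 : ℤ)
    (hk1 : Int.gcd k1 (l1 : ℤ) = 1) (hk2 : Int.gcd k2 (l2 : ℤ) = 1) :
    Int.gcd (((l / l1 : ℕ) : ℤ) * k1 * ((l / l2 : ℕ) : ℤ) * k2) (l : ℤ) =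
      Nat.lcm (l / l1) (l / l2) *
        Nat.gcd (Nat.gcd (l / l1) (l / l2)) (Nat.gcd l1 l2) :=
  stmt_5_general l1 l2 l3 l hl k1 k2 hk1 hk2
end

section
/- Let K be a field, q ∈ K \ {0,1} with q^l = 1 for a positive integer l. Then in the first quantum Weyl algebra A1^q(K), the elements x^l and y^l are central. -/
/-- The defining relation of the first quantum Weyl algebra `A₁^q(K)`:
`x * y - q • (y * x) = 1`, where `x, y` are the two generators of the free algebra. -/
inductive Weyl1Rel (K : Type*) [Field K] (q : K) :
    FreeAlgebra K (Fin 2) → FreeAlgebra K (Fin 2) → Prop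
  | rel : Weyl1Rel K q
      (FreeAlgebra.ι K (0 : Fin 2) * FreeAlgebra.ι K (1 : Fin 2) -
        q • (FreeAlgebra.ι K (1 : Fin 2) * FreeAlgebra.ι K (0 : Fin 2))) 1

/-- The first quantum Weyl algebra `A₁^q(K)`, generated by `x, y` with `xy - q yx = 1`. -/
abbrev Weyl1 (K : Type*) [Field K] (q : K) := RingQuot (Weyl1Rel K q)

/-- The generator `x` of `A₁^q(K)`. -/
noncomputable abbrev Weyl1.x (K : Type*) [Field K] (q : K) : Weyl1 K q :=
  RingQuot.mkAlgHom K (Weyl1Rel K q) (FreeAlgebra.ι K (0 : Fin 2))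

/-- The generator `y` of `A₁^q(K)`. -/
noncomputable abbrev Weyl1.y (K : Type*) [Field K] (q : K) : Weyl1 K q :=
  RingQuot.mkAlgHom K (Weyl1Rel K q) (FreeAlgebra.ι K (1 : Fin 2))

section aux
variable {K : Type*} [Field K] {A : Type*} [Ring A] [Algebra K A]

lemma pow_mul_aux (a b : A) (p c : K) (h : a * b = p • (b * a) + c • 1) :
    ∀ n : ℕ, a ^ (n + 1) * b =
      p ^ (n + 1) • (b * a ^ (n + 1)) +
        (c * ∑ i ∈ Finset.range (n + 1), p ^ i) • a ^ n := by
  intro n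
  induction n with
  | zero => simpa using h
  | succ n ih =>
      have h2 : a ^ (n + 2) * b = a * (a ^ (n + 1) * b) := by
        rw [pow_succ' a (n+1), mul_assoc]
      have e1 : b * a * a ^ (n+1) = b * a ^ (n+2) := by rw [mul_assoc, ← pow_succ']
      have e2 : a * a ^ n = a ^ (n+1) := (pow_succ' a n).symm
      rw [h2, ih, mul_add, mul_smul_comm, mul_smul_comm, ← mul_assoc, h,
        add_mul, smul_mul_assoc, smul_mul_assoc, e1, one_mul,
        e2]
      simp only [Finset.sum_range_succ]
      module
end aux

/-- If an element commutes with both generators, it commutes with everything. -/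
lemma weyl1_commute_all {K : Type*} [Field K] (q : K) (z : Weyl1 K q)
    (hx : Weyl1.x K q * z = z * Weyl1.x K q)
    (hy : Weyl1.y K q * z = z * Weyl1.y K q) :
    ∀ a : Weyl1 K q, a * z = z * a := by
  intro a
  obtain ⟨b, rfl⟩ := RingQuot.mkAlgHom_surjective K (Weyl1Rel K q) a
  induction b using FreeAlgebra.induction with
  | grade0 r =>
      simp [Algebra.commutes]
  | grade1 i =>
      fin_cases i
      · exact hx
      · exact hy
  | mul u v hu hv =>
      rw [map_mul, mul_assoc, hv, ← mul_assoc, hu, mul_assoc]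
  | add u v hu hv =>
      rw [map_add, add_mul, mul_add, hu, hv]

theorem stmt_13 {K : Type*} [Field K] (q : K) (hq0 : q ≠ 0) (hq1 : q ≠ 1)
    (l : ℕ) (hl : 0 < l) (hql : q ^ l = 1) :
    Weyl1.x K q ^ l ∈ Subalgebra.center K (Weyl1 K q) ∧
      Weyl1.y K q ^ l ∈ Subalgebra.center K (Weyl1 K q) := by
  set x := Weyl1.x K q with hxdef
  set y := Weyl1.y K q with hydef
  -- the defining relation in the quotient
  have hrel0 : x * y - q • (y * x) = 1 := by
    have := RingQuot.mkAlgHom_rel K (Weyl1Rel.rel (K := K) (q := q))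
    simpa [hxdef, hydef, map_sub, map_mul, map_smul, map_one] using this
  have hrel : x * y = q • (y * x) + (1 : K) • (1 : Weyl1 K q) := by
    rw [one_smul, ← hrel0]; abel
  have hrel' : y * x = q⁻¹ • (x * y) + (-q⁻¹) • (1 : Weyl1 K q) := by
    have h1 : q • (y * x) = x * y - 1 := by rw [← hrel0]; abel
    calc y * x = q⁻¹ • (q • (y * x)) := by
            rw [smul_smul, inv_mul_cancel₀ hq0, one_smul]
      _ = q⁻¹ • (x * y) + (-q⁻¹) • (1 : Weyl1 K q) := by
            rw [h1, smul_sub, sub_eq_add_neg, ← neg_smul]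
  -- geometric sums vanish
  have hgs : ∑ i ∈ Finset.range l, q ^ i = 0 := by
    rw [geom_sum_eq hq1, hql, sub_self, zero_div]
  have hqinv1 : q⁻¹ ≠ 1 := fun h => hq1 (by rw [← inv_inv q, h, inv_one])
  have hqinvl : q⁻¹ ^ l = 1 := by rw [inv_pow, hql, inv_one]
  have hgs' : ∑ i ∈ Finset.range l, q⁻¹ ^ i = 0 := by
    rw [geom_sum_eq hqinv1, hqinvl, sub_self, zero_div]
  obtain ⟨m, rfl⟩ : ∃ m, l = m + 1 := ⟨l - 1, (Nat.succ_pred_eq_of_pos hl).symm⟩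
  have hx : x ^ (m + 1) * y = y * x ^ (m + 1) := by
    rw [pow_mul_aux x y q 1 hrel m, hql, one_smul, one_mul, hgs, zero_smul, add_zero]
  have hy : y ^ (m + 1) * x = x * y ^ (m + 1) := by
    rw [pow_mul_aux y x q⁻¹ (-q⁻¹) hrel' m, hqinvl, one_smul, hgs', mul_zero,
      zero_smul, add_zero]
  constructor
  · rw [Subalgebra.mem_center_iff]
    intro a
    exact weyl1_commute_all q (x ^ (m + 1))
      (by rw [← pow_succ', ← pow_succ]) hx.symm a
  · rw [Subalgebra.mem_center_iff]
    intro a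
    exact weyl1_commute_all q (y ^ (m + 1)) hy.symm
      (by rw [← pow_succ', ← pow_succ]) a
end

section
/- Let K be an algebraically closed field, q ∈ K* a primitive n-th root of unity with n ≥ 2, and V a module over A1^q(K) (generated by x, y with xy - qyx = 1) such that y acts nilpotently, z = 1 + (q-1)yx acts as the nonzero scalar γ on a vector w with w*x = 0, and suppose w*y^{r-1} ≠ 0 and w*y^r = 0 for some r ≥ 1. Then q^r = 1, i.e., n divides r. -/
/-- For a right module over `A₁^q(K)` (encoded through the action
operators `X, Y` on `V`, where right-module composition gives
`Y * X - q • (X * Y) = 1`), if `y` acts nilpotently, `w * x = 0`, the element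
`z = 1 + (q-1) y x` acts on `w` by a nonzero scalar `γ`, and
`w * y^(r-1) ≠ 0`, `w * y^r = 0`, then `q^r = 1`, i.e. `n ∣ r`. -/
theorem stmt_14 {K : Type*} [Field K] [IsAlgClosed K]
    (q : K) (n : ℕ) (hn : 2 ≤ n) (hq : orderOf q = n)
    (V : Type*) [AddCommGroup V] [Module K V]
    (X Y : Module.End K V)
    -- the relation xy - q yx = 1 of A₁^q(K), as right-action operators
    (hrel : Y * X - q • (X * Y) = 1)
    -- y acts nilpotently
    (hnil : ∃ m : ℕ, Y ^ m = 0)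
    (w : V) (γ : K) (hγ : γ ≠ 0)
    (hwx : X w = 0)
    -- z = 1 + (q-1) y x acts on w as the scalar γ
    (hwz : ((1 : Module.End K V) + (q - 1) • (X * Y)) w = γ • w)
    (r : ℕ) (hr : 1 ≤ r)
    (hne : (Y ^ (r - 1)) w ≠ 0) (hzero : (Y ^ r) w = 0) :
    q ^ r = 1 ∧ n ∣ r := by
  have hrel' : ∀ v : V, Y (X v) - q • X (Y v) = v := by
    intro v
    have := LinearMap.congr_fun hrel v
    simpa [Module.End.mul_apply, LinearMap.sub_apply, LinearMap.smul_apply] using this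
  have key : ∀ m : ℕ, (q ^ (m + 1) * (q - 1)) • X ((Y ^ (m + 1)) w)
      = (1 - q ^ (m + 1)) • (Y ^ m) w := by
    intro m
    induction m with
    | zero =>
      have h := hrel' w
      rw [hwx, map_zero, zero_sub] at h
      have hq' : q • X (Y w) = -w := neg_eq_iff_eq_neg.mp h
      show (q ^ 1 * (q - 1)) • X ((Y ^ 1) w) = (1 - q ^ 1) • (Y ^ 0) w
      rw [pow_one, pow_one, pow_zero, Module.End.one_apply]
      calc (q * (q - 1)) • X (Y w) = (q - 1) • (q • X (Y w)) := by
            rw [smul_smul]; ring_nf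
        _ = (q - 1) • (-w) := by rw [hq']
        _ = (1 - q) • w := by rw [smul_neg, ← neg_smul]; ring_nf
    | succ m ih =>
      have h := hrel' ((Y ^ (m + 1)) w)
      have hY2 : Y ((Y ^ (m + 1)) w) = (Y ^ (m + 2)) w := by
        rw [pow_succ' Y (m + 1), Module.End.mul_apply]
      rw [hY2] at h
      -- h : Y (X ((Y^(m+1)) w)) - q • X ((Y^(m+2)) w) = (Y^(m+1)) w
      have hmul : (q ^ (m + 1) * (q - 1)) • (Y (X ((Y ^ (m + 1)) w)) - q • X ((Y ^ (m + 2)) w))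
          = (q ^ (m + 1) * (q - 1)) • ((Y ^ (m + 1)) w) := by rw [h]
      have hY1 : Y ((Y ^ m) w) = (Y ^ (m + 1)) w := by
        rw [pow_succ' Y m, Module.End.mul_apply]
      rw [smul_sub, ← map_smul, ih, map_smul, hY1, smul_smul] at hmul
      show (q ^ (m + 2) * (q - 1)) • X ((Y ^ (m + 2)) w)
          = (1 - q ^ (m + 2)) • (Y ^ (m + 1)) w
      have key2 : (q ^ (m + 1) * (q - 1) * q) • X ((Y ^ (m + 2)) w)
          = ((1 - q ^ (m + 1)) - q ^ (m + 1) * (q - 1)) • (Y ^ (m + 1)) w := by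
        rw [sub_smul, ← hmul]; abel
      rw [show q ^ (m + 2) * (q - 1) = q ^ (m + 1) * (q - 1) * q from by ring,
        show (1 : K) - q ^ (m + 2) = (1 - q ^ (m + 1)) - q ^ (m + 1) * (q - 1) from by ring]
      exact key2
  obtain ⟨s, hs⟩ : ∃ s, r = s + 1 := ⟨r - 1, (Nat.succ_pred_eq_of_pos hr).symm⟩
  have hk := key s
  rw [← hs] at hk
  have hs' : r - 1 = s := by omega
  rw [hzero, map_zero, smul_zero] at hk
  rw [hs'] at hne
  have h1 : 1 - q ^ r = 0 := by
    rcases smul_eq_zero.mp hk.symm with h | h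
    · exact h
    · exact absurd h hne
  have hqr : q ^ r = 1 := by linear_combination -h1
  exact ⟨hqr, hq ▸ orderOf_dvd_of_pow_eq_one hqr⟩
end

section
/- Let K be a field, q a primitive n-th root of unity in K (n ≥ 2), and μ ∈ K*. Define linear operators X, Y on the K-vector space V with basis v_0, ..., v_{n-1} by: v_k X = ((q^{-k} - 1)/(q - 1)) v_{k-1} for k ≥ 1 and v_0 X = 0; v_k Y = v_{k+1} for k ≤ n-2 and v_{n-1} Y = 0. Then XY - qYX = id_V, so V is an A1^q(K)-module, and V is a simple module of dimension n. -/
set_option maxHeartbeats 2000000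

/-- the explicit `n`-dimensional simple module `V₄`-type module over
`A₁^q(K)`: on the space with basis `v_0, …, v_{n-1}` define (right) operators
`v_k X = ((q^{-k}-1)/(q-1)) v_{k-1}`, `v_0 X = 0`, `v_k Y = v_{k+1}`,
`v_{n-1} Y = 0`.  Then `XY - qYX = id` (in right-operator composition,
`Y * X - q • (X * Y) = 1`), so `V` is an `A₁^q(K)`-module, it has dimension `n`,
and it is simple: the only subspaces invariant under both `X` and `Y` are `0`, `V`. -/
theorem stmt_15 {K : Type*} [Field K] (q : K) (n : ℕ) (hn : 2 ≤ n)
    (hq : orderOf q = n) :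
    let X : Module.End K (Fin n → K) := Matrix.toLin'
      (Matrix.of fun j k : Fin n => if (j : ℕ) + 1 = (k : ℕ) then
        (q ^ (-(k : ℤ)) - 1) / (q - 1) else 0)
    let Y : Module.End K (Fin n → K) := Matrix.toLin'
      (Matrix.of fun j k : Fin n => if (j : ℕ) = (k : ℕ) + 1 then (1 : K) else 0)
    Y * X - q • (X * Y) = 1 ∧
      Module.finrank K (Fin n → K) = n ∧
      ∀ W : Submodule K (Fin n → K),
        (∀ v ∈ W, X v ∈ W) → (∀ v ∈ W, Y v ∈ W) → W = ⊥ ∨ W = ⊤ := by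
  intro X Y
  have hqn : q ^ n = 1 := by rw [← hq]; exact pow_orderOf_eq_one q
  have hq0 : q ≠ 0 := by
    intro h; rw [h, zero_pow (by omega : n ≠ 0)] at hqn; exact zero_ne_one hqn
  have hq1 : q - 1 ≠ 0 := by
    intro h
    rw [sub_eq_zero.mp h, orderOf_one] at hq; omega
  have hqk : ∀ k : ℕ, 0 < k → k < n → q ^ k ≠ 1 := by
    intro k hk1 hk2 h
    have := orderOf_dvd_of_pow_eq_one h
    rw [hq] at this
    exact absurd (Nat.le_of_dvd hk1 this) (by omega)
  -- c
  set c : ℕ → K := fun k => (q ^ (-(k:ℤ)) - 1) / (q - 1) with hc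
  have hz : ∀ k : ℕ, q ^ (-(k:ℤ)) = (q ^ k)⁻¹ := by
    intro k; rw [zpow_neg, zpow_natCast]
  have hcne : ∀ k : ℕ, 0 < k → k < n → c k ≠ 0 := by
    intro k h1 h2
    have h3 : q ^ (-(k:ℤ)) ≠ 1 := by
      rw [hz]
      intro h; apply hqk k h1 h2
      have := congrArg Inv.inv h; simpa using this
    exact div_ne_zero (sub_ne_zero.mpr h3) hq1
  -- component formulas
  have hXapp : ∀ (v : Fin n → K) (j : Fin n), X v j =
      if h : (j:ℕ)+1 < n then c ((j:ℕ)+1) * v ⟨(j:ℕ)+1, h⟩ else 0 := by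
    intro v j
    show Matrix.toLin' _ v j = _
    rw [Matrix.toLin'_apply]
    simp only [Matrix.mulVec, dotProduct, Matrix.of_apply]
    split
    · next h =>
      rw [Finset.sum_eq_single (⟨(j:ℕ)+1, h⟩ : Fin n)]
      · rw [if_pos rfl]
      · intro k _ hk
        rw [if_neg, zero_mul]
        intro he; exact hk (Fin.ext he.symm)
      · simp
    · next h =>
      apply Finset.sum_eq_zero
      intro k _
      rw [if_neg, zero_mul]
      intro he; have := k.isLt; omega
  have hYapp : ∀ (v : Fin n → K) (j : Fin n), Y v j =
      if h : 0 < (j:ℕ) then v ⟨(j:ℕ)-1, by omega⟩ else 0 := by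
    intro v j
    show Matrix.toLin' _ v j = _
    rw [Matrix.toLin'_apply]
    simp only [Matrix.mulVec, dotProduct, Matrix.of_apply]
    split
    · next h =>
      rw [Finset.sum_eq_single (⟨(j:ℕ)-1, by omega⟩ : Fin n)]
      · rw [if_pos (by simp; omega), one_mul]
      · intro k _ hk
        rw [if_neg, zero_mul]
        intro he; apply hk; apply Fin.ext; simp; omega
      · simp
    · next h =>
      apply Finset.sum_eq_zero
      intro k _
      rw [if_neg, zero_mul]
      omega
  haveI : NeZero n := ⟨by omega⟩
  refine ⟨?_, ?_, ?_⟩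
  · -- the commutation relation
    apply LinearMap.ext; intro v
    funext j
    have e1 : (Y * X - q • (X * Y)) v j = Y (X v) j - q * (X (Y v) j) := by
      simp [Module.End.mul_apply]
    have e2 : (1 : Module.End K (Fin n → K)) v j = v j := rfl
    rw [e1, e2, hYapp (X v) j, hXapp (Y v) j]
    by_cases h0 : 0 < (j:ℕ)
    · rw [dif_pos h0, hXapp]
      have hjj : (((⟨(j:ℕ)-1, by omega⟩ : Fin n) : ℕ) + 1) = (j:ℕ) := by
        simp; omega
      by_cases h2 : (j:ℕ) + 1 < n
      · rw [dif_pos (show ((⟨(j:ℕ)-1, by omega⟩ : Fin n) : ℕ) + 1 < n by simp; omega)]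
        rw [dif_pos h2, hYapp, dif_pos (show 0 < ((⟨(j:ℕ)+1, h2⟩ : Fin n) : ℕ) by simp)]
        have ev1 : v ⟨((⟨(j:ℕ)-1, by omega⟩ : Fin n) : ℕ)+1, by simp; omega⟩ = v j := by
          congr 1; apply Fin.ext; show (j:ℕ)-1+1 = (j:ℕ); omega
        have ev2 : v ⟨((⟨(j:ℕ)+1, h2⟩ : Fin n) : ℕ)-1, Nat.lt_of_le_of_lt (Nat.sub_le _ _) (Fin.is_lt _)⟩ = v j := rfl
        rw [ev1, ev2]
        have hcc : c (((⟨(j:ℕ)-1, by omega⟩ : Fin n) : ℕ) + 1) - q * c ((j:ℕ)+1) = 1 := by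
          rw [hjj]
          simp only [hc, hz, pow_succ]
          have hpj : q ^ (j:ℕ) ≠ 0 := pow_ne_zero _ hq0
          field_simp
          ring
        calc c (((⟨(j:ℕ)-1, by omega⟩ : Fin n) : ℕ)+1) * v j - q * (c ((j:ℕ)+1) * v j)
            = (c (((⟨(j:ℕ)-1, by omega⟩ : Fin n) : ℕ)+1) - q * c ((j:ℕ)+1)) * v j := by ring
          _ = v j := by rw [hcc, one_mul]
      · -- j = n-1
        rw [dif_pos (show ((⟨(j:ℕ)-1, by omega⟩ : Fin n) : ℕ) + 1 < n by simp; omega)]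
        rw [dif_neg h2]
        have ev1 : v ⟨((⟨(j:ℕ)-1, by omega⟩ : Fin n) : ℕ)+1, by simp; omega⟩ = v j := by
          congr 1; apply Fin.ext; show (j:ℕ)-1+1 = (j:ℕ); omega
        rw [ev1]
        have hj : (((⟨(j:ℕ)-1, by omega⟩ : Fin n) : ℕ) + 1) = n - 1 := by
          have := j.isLt; simp; omega
        have hcc : c (n-1) = 1 := by
          have hinv : (q ^ (n-1))⁻¹ = q := by
            apply inv_eq_of_mul_eq_one_left
            rw [← pow_succ']
            have : n - 1 + 1 = n := by omega
            rw [this, hqn]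
          simp only [hc, hz, hinv]
          rw [div_self hq1]
        rw [hj, hcc, one_mul, mul_zero, sub_zero]
    · -- j = 0
      rw [dif_neg h0]
      have hj0 : (j:ℕ) = 0 := by omega
      rw [dif_pos (show (j:ℕ)+1 < n by omega), hYapp,
        dif_pos (show 0 < ((⟨(j:ℕ)+1, by omega⟩ : Fin n) : ℕ) by simp)]
      have ev2 : v ⟨((⟨(j:ℕ)+1, by omega⟩ : Fin n) : ℕ)-1, Nat.lt_of_le_of_lt (Nat.sub_le _ _) (Fin.is_lt _)⟩ = v j := rfl
      rw [ev2]
      have hcc : (0:K) - q * (c ((j:ℕ)+1) * v j) = (0 - q * c ((j:ℕ)+1)) * v j := by ring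
      rw [hcc]
      have : (0:K) - q * c ((j:ℕ)+1) = 1 := by
        rw [hj0]
        simp only [hc, hz, pow_one]
        field_simp
        ring
      rw [this, one_mul]
  · -- dimension
    simp [Module.finrank_pi]
  · -- simplicity
    intro W hXW hYW
    by_cases hW : W = ⊥
    · exact Or.inl hW
    right
    obtain ⟨w, hwW, hw0⟩ := (Submodule.ne_bot_iff W).mp hW
    -- step 1 : e₀ ∈ W
    have key : ∀ m : ℕ, ∀ w : Fin n → K, w ∈ W → w ≠ 0 →
        (∀ k : Fin n, m < (k:ℕ) → w k = 0) → Pi.single (0 : Fin n) (1:K) ∈ W := by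
      intro m
      induction m with
      | zero =>
        intro w hwW hw0 hsupp
        have h0 : w 0 ≠ 0 := by
          intro h; apply hw0; funext k
          show w k = 0
          by_cases hk : (k:ℕ) = 0
          · have : k = 0 := Fin.ext (by simpa using hk)
            rw [this, h]
          · exact hsupp k (by omega)
        have heq : Pi.single (0:Fin n) (1:K) = (w 0)⁻¹ • w := by
          funext k
          by_cases hk : k = (0:Fin n)
          · subst hk
            simp [Pi.single_eq_same, inv_mul_cancel₀ h0]
          · rw [Pi.single_eq_of_ne hk]
            have hk0 : (k:ℕ) ≠ 0 := fun h => hk (Fin.ext (by simpa using h))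
            rw [Pi.smul_apply, hsupp k (by omega), smul_zero]
        rw [heq]; exact W.smul_mem _ hwW
      | succ m ih =>
        intro w hwW hw0 hsupp
        by_cases hm : ∃ h : m + 1 < n, w ⟨m+1, h⟩ ≠ 0
        · obtain ⟨hlt, hne⟩ := hm
          refine ih (X w) (hXW w hwW) ?_ ?_
          · intro h; apply hne
            have h3 := congrFun h ⟨m, by omega⟩
            rw [hXapp] at h3
            rw [dif_pos (show ((⟨m, by omega⟩ : Fin n) : ℕ) + 1 < n by simpa using hlt)] at h3
            rcases mul_eq_zero.mp h3 with h1 | h1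
            · exact absurd h1 (hcne (m+1) (by omega) hlt)
            · exact h1
          · intro k hk
            rw [hXapp]
            split
            · next h2 =>
              rw [hsupp ⟨(k:ℕ)+1, h2⟩ (by simp; omega), mul_zero]
            · rfl
        · push_neg at hm
          refine ih w hwW hw0 ?_
          intro k hk
          by_cases hkm : (k:ℕ) = m+1
          · have hkb : k = ⟨m+1, hkm ▸ k.isLt⟩ := Fin.ext hkm
            rw [hkb]; exact hm _
          · exact hsupp k (by omega)
    have e0 : Pi.single (0 : Fin n) (1:K) ∈ W :=
      key n w hwW hw0 (fun k hk => absurd k.isLt (by omega))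
    -- step 2 : all basis vectors
    have hsingle : ∀ k : ℕ, ∀ hk : k < n, Pi.single (⟨k, hk⟩ : Fin n) (1:K) ∈ W := by
      intro k
      induction k with
      | zero =>
        intro hk
        have : (⟨0, hk⟩ : Fin n) = 0 := Fin.ext (by simp)
        rw [this]; exact e0
      | succ k ih =>
        intro hk
        have hk' : k < n := by omega
        have hY : Y (Pi.single (⟨k, hk'⟩ : Fin n) (1:K)) = Pi.single (⟨k+1, hk⟩ : Fin n) (1:K) := by
          funext j
          rw [hYapp]
          by_cases h0 : 0 < (j:ℕ)
          · rw [dif_pos h0, Pi.single_apply, Pi.single_apply]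
            by_cases hj : (j:ℕ) = k+1
            · rw [if_pos (Fin.ext (by simp; omega)), if_pos (Fin.ext (by simp; omega))]
            · rw [if_neg, if_neg]
              · intro h; apply hj; have := Fin.ext_iff.mp h; simpa using this
              · intro h; apply hj; have := Fin.ext_iff.mp h; simp at this; omega
          · rw [dif_neg h0, Pi.single_apply, if_neg]
            intro h; have := Fin.ext_iff.mp h; simp at this; omega
        rw [← hY]
        exact hYW _ (ih hk')
    -- step 3 : W = ⊤
    rw [eq_top_iff]
    intro v _
    have hv : v = ∑ k : Fin n, v k • (Pi.single k 1 : Fin n → K) := by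
      funext j
      rw [Finset.sum_apply]
      simp only [Pi.smul_apply, Pi.single_apply, smul_eq_mul]
      simp [Finset.sum_ite_eq]
    rw [hv]
    exact Submodule.sum_mem _ (fun k _ => W.smul_mem _ (hsingle k k.isLt))
end

section
/- Let K be a field containing nonzero scalars q1, q2, λ with q1, q2 ≠ 1. In the algebra A(q1,q2,λ) generated by x1,y1,x2,y2 with relations x1x2 = q1λ x2x1, x1y2 = λ^{-1} y2x1, y1y2 = λ y2y1, y1x2 = q1^{-1}λ^{-1} x2y1, x1y1 - q1 y1x1 = 1, x2y2 - q2 y2x2 = 1 + (q1-1)y1x1, the elements z1 = 1 + (q1-1)y1x1 and z2 = z1 + (q2-1)y2x2 satisfy z1 z2 = z2 z1, z1 = x1y1 - y1x1, z2 = x2y2 - y2x2, and the commutation relations z1x1 = q1^{-1}x1z1, z1y1 = q1y1z1, z1x2 = x2z1, z1y2 = y2z1, z2x1 = q1^{-1}x1z2, z2y1 = q1y1z2, z2x2 = q2^{-1}x2z2, z2y2 = q2y2z2. -/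
/-- The defining relations of the multiparameter second quantum Weyl algebra
`A(q₁, q₂, λ)`, on the free algebra on generators `x₁ = ι 0`, `y₁ = ι 1`,
`x₂ = ι 2`, `y₂ = ι 3`. -/
inductive Weyl2Rel (K : Type*) [Field K] (q1 q2 lam : K) :
    FreeAlgebra K (Fin 4) → FreeAlgebra K (Fin 4) → Prop
  | r1 : Weyl2Rel K q1 q2 lam
      (FreeAlgebra.ι K (0 : Fin 4) * FreeAlgebra.ι K (2 : Fin 4))
      ((q1 * lam) • (FreeAlgebra.ι K (2 : Fin 4) * FreeAlgebra.ι K (0 : Fin 4)))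
  | r2 : Weyl2Rel K q1 q2 lam
      (FreeAlgebra.ι K (0 : Fin 4) * FreeAlgebra.ι K (3 : Fin 4))
      (lam⁻¹ • (FreeAlgebra.ι K (3 : Fin 4) * FreeAlgebra.ι K (0 : Fin 4)))
  | r3 : Weyl2Rel K q1 q2 lam
      (FreeAlgebra.ι K (1 : Fin 4) * FreeAlgebra.ι K (3 : Fin 4))
      (lam • (FreeAlgebra.ι K (3 : Fin 4) * FreeAlgebra.ι K (1 : Fin 4)))
  | r4 : Weyl2Rel K q1 q2 lam
      (FreeAlgebra.ι K (1 : Fin 4) * FreeAlgebra.ι K (2 : Fin 4))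
      ((q1⁻¹ * lam⁻¹) • (FreeAlgebra.ι K (2 : Fin 4) * FreeAlgebra.ι K (1 : Fin 4)))
  | r5 : Weyl2Rel K q1 q2 lam
      (FreeAlgebra.ι K (0 : Fin 4) * FreeAlgebra.ι K (1 : Fin 4) -
        q1 • (FreeAlgebra.ι K (1 : Fin 4) * FreeAlgebra.ι K (0 : Fin 4))) 1
  | r6 : Weyl2Rel K q1 q2 lam
      (FreeAlgebra.ι K (2 : Fin 4) * FreeAlgebra.ι K (3 : Fin 4) -
        q2 • (FreeAlgebra.ι K (3 : Fin 4) * FreeAlgebra.ι K (2 : Fin 4)))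
      (1 + (q1 - 1) • (FreeAlgebra.ι K (1 : Fin 4) * FreeAlgebra.ι K (0 : Fin 4)))

/-- The multiparameter second quantum Weyl algebra `A(q₁, q₂, λ)`. -/
abbrev Weyl2 (K : Type*) [Field K] (q1 q2 lam : K) := RingQuot (Weyl2Rel K q1 q2 lam)

/-- The generator `x₁` of `A(q₁, q₂, λ)`. -/
noncomputable abbrev Weyl2.x1 (K : Type*) [Field K] (q1 q2 lam : K) : Weyl2 K q1 q2 lam :=
  RingQuot.mkAlgHom K (Weyl2Rel K q1 q2 lam) (FreeAlgebra.ι K (0 : Fin 4))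

/-- The generator `y₁` of `A(q₁, q₂, λ)`. -/
noncomputable abbrev Weyl2.y1 (K : Type*) [Field K] (q1 q2 lam : K) : Weyl2 K q1 q2 lam :=
  RingQuot.mkAlgHom K (Weyl2Rel K q1 q2 lam) (FreeAlgebra.ι K (1 : Fin 4))

/-- The generator `x₂` of `A(q₁, q₂, λ)`. -/
noncomputable abbrev Weyl2.x2 (K : Type*) [Field K] (q1 q2 lam : K) : Weyl2 K q1 q2 lam :=
  RingQuot.mkAlgHom K (Weyl2Rel K q1 q2 lam) (FreeAlgebra.ι K (2 : Fin 4))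

/-- The generator `y₂` of `A(q₁, q₂, λ)`. -/
noncomputable abbrev Weyl2.y2 (K : Type*) [Field K] (q1 q2 lam : K) : Weyl2 K q1 q2 lam :=
  RingQuot.mkAlgHom K (Weyl2Rel K q1 q2 lam) (FreeAlgebra.ι K (3 : Fin 4))

theorem stmt_16 {K : Type*} [Field K] (q1 q2 lam : K)
    (hq10 : q1 ≠ 0) (hq11 : q1 ≠ 1) (hq20 : q2 ≠ 0) (hq21 : q2 ≠ 1) (hlam : lam ≠ 0) :
    let x1 := Weyl2.x1 K q1 q2 lam
    let y1 := Weyl2.y1 K q1 q2 lam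
    let x2 := Weyl2.x2 K q1 q2 lam
    let y2 := Weyl2.y2 K q1 q2 lam
    let z1 := 1 + (q1 - 1) • (y1 * x1)
    let z2 := z1 + (q2 - 1) • (y2 * x2)
    z1 * z2 = z2 * z1 ∧
      z1 = x1 * y1 - y1 * x1 ∧
      z2 = x2 * y2 - y2 * x2 ∧
      z1 * x1 = q1⁻¹ • (x1 * z1) ∧ z1 * y1 = q1 • (y1 * z1) ∧
      z1 * x2 = x2 * z1 ∧ z1 * y2 = y2 * z1 ∧
      z2 * x1 = q1⁻¹ • (x1 * z2) ∧ z2 * y1 = q1 • (y1 * z2) ∧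
      z2 * x2 = q2⁻¹ • (x2 * z2) ∧ z2 * y2 = q2 • (y2 * z2) := by
  intro x1 y1 x2 y2 z1 z2
  have h1 : x1 * x2 = (q1 * lam) • (x2 * x1) := by
    have := RingQuot.mkAlgHom_rel K (Weyl2Rel.r1 (K := K) (q1 := q1) (q2 := q2) (lam := lam))
    simpa only [map_mul, map_smul] using this
  have h2 : x1 * y2 = lam⁻¹ • (y2 * x1) := by
    have := RingQuot.mkAlgHom_rel K (Weyl2Rel.r2 (K := K) (q1 := q1) (q2 := q2) (lam := lam))
    simpa only [map_mul, map_smul] using this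
  have h3 : y1 * y2 = lam • (y2 * y1) := by
    have := RingQuot.mkAlgHom_rel K (Weyl2Rel.r3 (K := K) (q1 := q1) (q2 := q2) (lam := lam))
    simpa only [map_mul, map_smul] using this
  have h4 : y1 * x2 = (q1⁻¹ * lam⁻¹) • (x2 * y1) := by
    have := RingQuot.mkAlgHom_rel K (Weyl2Rel.r4 (K := K) (q1 := q1) (q2 := q2) (lam := lam))
    simpa only [map_mul, map_smul] using this
  have h5 : x1 * y1 = 1 + q1 • (y1 * x1) := by
    have := RingQuot.mkAlgHom_rel K (Weyl2Rel.r5 (K := K) (q1 := q1) (q2 := q2) (lam := lam))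
    simp only [map_sub, map_mul, map_smul, map_one] at this
    rw [sub_eq_iff_eq_add] at this
    simpa [add_comm] using this
  have h6 : x2 * y2 = (1 + (q1 - 1) • (y1 * x1)) + q2 • (y2 * x2) := by
    have := RingQuot.mkAlgHom_rel K (Weyl2Rel.r6 (K := K) (q1 := q1) (q2 := q2) (lam := lam))
    simp only [map_sub, map_mul, map_smul, map_one, map_add] at this
    rw [sub_eq_iff_eq_add] at this
    simpa [add_comm, add_assoc, add_left_comm] using this
  have h1w : ∀ w, x1 * (x2 * w) = (q1 * lam) • (x2 * (x1 * w)) := fun w => by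
    rw [← mul_assoc, h1, smul_mul_assoc, mul_assoc]
  have h2w : ∀ w, x1 * (y2 * w) = lam⁻¹ • (y2 * (x1 * w)) := fun w => by
    rw [← mul_assoc, h2, smul_mul_assoc, mul_assoc]
  have h3w : ∀ w, y1 * (y2 * w) = lam • (y2 * (y1 * w)) := fun w => by
    rw [← mul_assoc, h3, smul_mul_assoc, mul_assoc]
  have h4w : ∀ w, y1 * (x2 * w) = (q1⁻¹ * lam⁻¹) • (x2 * (y1 * w)) := fun w => by
    rw [← mul_assoc, h4, smul_mul_assoc, mul_assoc]
  have h5w : ∀ w, x1 * (y1 * w) = w + q1 • (y1 * (x1 * w)) := fun w => by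
    rw [← mul_assoc, h5, add_mul, one_mul, smul_mul_assoc, mul_assoc]
  have h6w : ∀ w, x2 * (y2 * w) =
      (w + (q1 - 1) • (y1 * (x1 * w))) + q2 • (y2 * (x2 * w)) := fun w => by
    rw [← mul_assoc, h6]
    simp only [add_mul, one_mul, smul_mul_assoc, mul_assoc]
  have hz1 : z1 = 1 + (q1 - 1) • (y1 * x1) := rfl
  have hz2 : z2 = (1 + (q1 - 1) • (y1 * x1)) + (q2 - 1) • (y2 * x2) := rfl
  refine ⟨?_, ?_, ?_, ?_, ?_, ?_, ?_, ?_, ?_, ?_, ?_⟩ <;>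
    simp only [hz1, hz2, h6w, h5w, h4w, h3w, h2w, h1w, h6, h5, h4, h3, h2, h1,
      mul_add, add_mul, mul_one, one_mul, sub_mul, mul_sub, mul_smul_comm,
      smul_mul_assoc, smul_add, smul_sub, smul_smul, mul_assoc] <;>
    match_scalars <;> field_simp <;> ring
end

section
/- With notation as in the second quantum Weyl algebra A(q1,q2,λ), the map sending X1 ↦ -q1 y1, Y1 ↦ x1, X2 ↦ x2, Y2 ↦ q1 y2 extends to a K-algebra isomorphism A(q1^{-1}, q2, λ^{-1}) → A(q1, q2, λ). -/
/-!
Both maps are defined on generators, and well-definedness is a check of the six defining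
relations; the inverse is `x₁ ↦ Y₁`, `y₁ ↦ -q₁⁻¹X₁`, `x₂ ↦ X₂`, `y₂ ↦ q₁⁻¹Y₂`. The scalars are
forced: `-q₁` by `X₁Y₁ - q₁⁻¹Y₁X₁ = 1`, and `q₁` because under the substitution the right-hand
side `1 + (q₁⁻¹ - 1)Y₁X₁` of the `X₂Y₂`-relation becomes `1 + (q₁ - 1)x₁y₁ = q₁(1 + (q₁ - 1)y₁x₁)`.
-/

structure Weyl2Relations {K : Type*} [Field K] (q1 q2 lam : K) {R : Type*} [Ring R] [Algebra K R]
    (a b c d : R) : Prop where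
  x1_x2 : a * c = (q1 * lam) • (c * a)
  x1_y2 : a * d = lam⁻¹ • (d * a)
  y1_y2 : b * d = lam • (d * b)
  y1_x2 : b * c = (q1⁻¹ * lam⁻¹) • (c * b)
  x1_y1 : a * b - q1 • (b * a) = 1
  x2_y2 : c * d - q2 • (d * c) = 1 + (q1 - 1) • (b * a)

namespace Weyl2

variable {K : Type*} [Field K] {q1 q2 lam : K} {R : Type*} [Ring R] [Algebra K R]

variable (q1 q2 lam) in
theorem weyl2Relations_generators :
    Weyl2Relations q1 q2 lam (x1 K q1 q2 lam) (y1 K q1 q2 lam) (x2 K q1 q2 lam) (y2 K q1 q2 lam) :=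
  have rel {u v} (h : Weyl2Rel K q1 q2 lam u v) := RingQuot.mkAlgHom_rel K h
  { x1_x2 := by simpa only [map_mul, map_smul] using rel .r1
    x1_y2 := by simpa only [map_mul, map_smul] using rel .r2
    y1_y2 := by simpa only [map_mul, map_smul] using rel .r3
    y1_x2 := by simpa only [map_mul, map_smul] using rel .r4
    x1_y1 := by simpa only [map_sub, map_mul, map_smul, map_one] using rel .r5
    x2_y2 := by simpa only [map_sub, map_add, map_mul, map_smul, map_one] using rel .r6 }

noncomputable def lift {a b c d : R} (h : Weyl2Relations q1 q2 lam a b c d) :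
    Weyl2 K q1 q2 lam →ₐ[K] R :=
  RingQuot.liftAlgHom K ⟨FreeAlgebra.lift K ![a, b, c, d], fun _ _ hr => by
    cases hr <;> simp [h.x1_x2, h.x1_y2, h.y1_y2, h.y1_x2, h.x1_y1, h.x2_y2]⟩

section

variable {a b c d : R} (h : Weyl2Relations q1 q2 lam a b c d)

@[simp] theorem lift_x1 : lift h (x1 K q1 q2 lam) = a := by simp [lift]
@[simp] theorem lift_y1 : lift h (y1 K q1 q2 lam) = b := by simp [lift]
@[simp] theorem lift_x2 : lift h (x2 K q1 q2 lam) = c := by simp [lift]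
@[simp] theorem lift_y2 : lift h (y2 K q1 q2 lam) = d := by simp [lift, Matrix.cons_val_three]

end

theorem algHom_ext {f g : Weyl2 K q1 q2 lam →ₐ[K] R}
    (h1 : f (x1 K q1 q2 lam) = g (x1 K q1 q2 lam)) (h2 : f (y1 K q1 q2 lam) = g (y1 K q1 q2 lam))
    (h3 : f (x2 K q1 q2 lam) = g (x2 K q1 q2 lam)) (h4 : f (y2 K q1 q2 lam) = g (y2 K q1 q2 lam)) :
    f = g :=
  RingQuot.ringQuot_ext' K _ _ <| FreeAlgebra.hom_ext <| funext fun i => by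
    fin_cases i
    exacts [h1, h2, h3, h4]

end Weyl2

namespace Weyl2Relations

variable {K : Type*} [Field K] {q q2 lam : K} {R : Type*} [Ring R] [Algebra K R] {a b c d : R}

theorem inv_params (hq : q ≠ 0) (h : Weyl2Relations q q2 lam a b c d) :
    Weyl2Relations q⁻¹ q2 lam⁻¹ (-(q • b)) a c (q • d) where
  x1_x2 := by
    simp only [neg_mul, mul_neg, smul_mul_assoc, mul_smul_comm, h.y1_x2, smul_smul]
    match_scalars; field_simp
  x1_y2 := by
    simp only [neg_mul, mul_neg, smul_mul_assoc, mul_smul_comm, h.y1_y2, smul_smul, inv_inv]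
    match_scalars; ring
  y1_y2 := by
    simp only [smul_mul_assoc, mul_smul_comm, h.x1_y2, smul_smul]
    match_scalars; ring
  y1_x2 := by simpa only [inv_inv] using h.x1_x2
  x1_y1 := by
    simp only [neg_mul, mul_neg, smul_mul_assoc, mul_smul_comm, smul_neg, smul_smul]
    linear_combination (norm := skip) h.x1_y1
    match_scalars <;> field_simp <;> ring
  x2_y2 := by
    simp only [mul_neg, smul_mul_assoc, mul_smul_comm, smul_neg, smul_smul]
    linear_combination (norm := skip) q • h.x2_y2 - (q - 1) • h.x1_y1
    match_scalars <;> field_simp <;> ring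

theorem of_inv_params (hq : q ≠ 0) (h : Weyl2Relations q⁻¹ q2 lam⁻¹ a b c d) :
    Weyl2Relations q q2 lam b (-(q⁻¹ • a)) c (q⁻¹ • d) where
  x1_x2 := by simpa only [inv_inv] using h.y1_x2
  x1_y2 := by
    simp only [smul_mul_assoc, mul_smul_comm, h.y1_y2, smul_smul]
    match_scalars; ring
  y1_y2 := by
    simp only [neg_mul, mul_neg, smul_mul_assoc, mul_smul_comm, h.x1_y2, smul_smul, inv_inv]
    match_scalars; ring
  y1_x2 := by
    simp only [neg_mul, mul_neg, smul_mul_assoc, mul_smul_comm, h.x1_x2, smul_smul, smul_neg]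
    match_scalars; field_simp
  x1_y1 := by
    simp only [mul_neg, neg_mul, smul_mul_assoc, mul_smul_comm, smul_neg, smul_smul]
    linear_combination (norm := skip) h.x1_y1
    match_scalars <;> field_simp <;> ring
  x2_y2 := by
    simp only [neg_mul, smul_mul_assoc, mul_smul_comm, smul_neg, smul_smul]
    linear_combination (norm := skip) q⁻¹ • h.x2_y2 - (q⁻¹ - 1) • h.x1_y1
    match_scalars <;> field_simp <;> ring

end Weyl2Relations

theorem stmt_17_general {K : Type*} [Field K] (q1 q2 lam : K)
    (hq10 : q1 ≠ 0) :
    ∃ e : Weyl2 K q1⁻¹ q2 lam⁻¹ ≃ₐ[K] Weyl2 K q1 q2 lam,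
      e (Weyl2.x1 K q1⁻¹ q2 lam⁻¹) = -(q1 • Weyl2.y1 K q1 q2 lam) ∧
      e (Weyl2.y1 K q1⁻¹ q2 lam⁻¹) = Weyl2.x1 K q1 q2 lam ∧
      e (Weyl2.x2 K q1⁻¹ q2 lam⁻¹) = Weyl2.x2 K q1 q2 lam ∧
      e (Weyl2.y2 K q1⁻¹ q2 lam⁻¹) = q1 • Weyl2.y2 K q1 q2 lam := by
  let F := Weyl2.lift ((Weyl2.weyl2Relations_generators q1 q2 lam).inv_params hq10)
  let G := Weyl2.lift ((Weyl2.weyl2Relations_generators q1⁻¹ q2 lam⁻¹).of_inv_params hq10)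
  refine ⟨AlgEquiv.ofAlgHom F G ?_ ?_, Weyl2.lift_x1 _, Weyl2.lift_y1 _, Weyl2.lift_x2 _,
    Weyl2.lift_y2 _⟩
  · apply Weyl2.algHom_ext <;> simp [F, G, smul_smul, hq10]
  · apply Weyl2.algHom_ext <;> simp [F, G, smul_smul, hq10]

/-- `X₁ ↦ -q₁ y₁`, `Y₁ ↦ x₁`, `X₂ ↦ x₂`, `Y₂ ↦ q₁ y₂` extends to a
`K`-algebra isomorphism `A(q₁⁻¹, q₂, λ⁻¹) → A(q₁, q₂, λ)`. -/
theorem stmt_17 {K : Type*} [Field K] (q1 q2 lam : K)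
    (hq10 : q1 ≠ 0) (hq11 : q1 ≠ 1) (hq20 : q2 ≠ 0) (hq21 : q2 ≠ 1) (hlam : lam ≠ 0) :
    ∃ e : Weyl2 K q1⁻¹ q2 lam⁻¹ ≃ₐ[K] Weyl2 K q1 q2 lam,
      e (Weyl2.x1 K q1⁻¹ q2 lam⁻¹) = -(q1 • Weyl2.y1 K q1 q2 lam) ∧
      e (Weyl2.y1 K q1⁻¹ q2 lam⁻¹) = Weyl2.x1 K q1 q2 lam ∧
      e (Weyl2.x2 K q1⁻¹ q2 lam⁻¹) = Weyl2.x2 K q1 q2 lam ∧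
      e (Weyl2.y2 K q1⁻¹ q2 lam⁻¹) = q1 • Weyl2.y2 K q1 q2 lam :=
  stmt_17_general q1 q2 lam hq10
end

section
/- Suppose q1, q2, λ ∈ K* have finite multiplicative orders l1, l2, l3, and let l = lcm(l1,l2,l3). Then in A(q1,q2,λ) the elements x1^l, y1^l, x2^l, y2^l are central. -/
section AuxComm
variable {K A : Type*} [CommSemiring K] [Semiring A] [Algebra K A]

lemma my_pow_left_scomm {a b : A} {c : K} (h : a * b = c • (b * a)) (n : ℕ) :
    a ^ n * b = c ^ n • (b * a ^ n) := by
  induction n with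
  | zero => simp
  | succ n ih =>
    rw [pow_succ, mul_assoc, h, mul_smul_comm, ← mul_assoc, ih, smul_mul_assoc, smul_smul,
      mul_assoc, ← pow_succ, ← pow_succ']

lemma my_pow_right_scomm {a b : A} {c : K} (h : a * b = c • (b * a)) (n : ℕ) :
    a * b ^ n = c ^ n • (b ^ n * a) := by
  induction n with
  | zero => simp
  | succ n ih =>
    rw [pow_succ', ← mul_assoc, h, smul_mul_assoc, mul_assoc, ih, mul_smul_comm, smul_smul,
      ← mul_assoc, ← pow_succ']

lemma my_qweyl_left {x y z : A} {q : K} (h : x * y = q • (y * x) + z) (hz : z * x = x * z)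
    (n : ℕ) : x ^ (n + 1) * y =
      q ^ (n + 1) • (y * x ^ (n + 1)) + (∑ i ∈ Finset.range (n + 1), q ^ i) • (z * x ^ n) := by
  induction n with
  | zero => simpa using h
  | succ n ih =>
    rw [pow_succ' x (n + 1), mul_assoc, ih, mul_add, mul_smul_comm, mul_smul_comm,
      ← mul_assoc x y, h, add_mul, smul_mul_assoc, mul_assoc y x, ← pow_succ',
      ← mul_assoc x z, ← hz, mul_assoc z x, ← pow_succ', smul_add, smul_smul,
      Finset.sum_range_succ (fun i => q ^ i) (n + 1)]
    module

lemma my_qweyl_right {x y z : A} {q : K} (h : x * y = q • (y * x) + z) (hz : z * y = y * z)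
    (n : ℕ) : x * y ^ (n + 1) =
      q ^ (n + 1) • (y ^ (n + 1) * x) + (∑ i ∈ Finset.range (n + 1), q ^ i) • (z * y ^ n) := by
  have hc : ∀ m : ℕ, z * y ^ m = y ^ m * z := fun m => ((Commute.pow_right hz m))
  induction n with
  | zero => simpa using h
  | succ n ih =>
    rw [pow_succ y (n + 1), ← mul_assoc, ih, add_mul, smul_mul_assoc, smul_mul_assoc,
      mul_assoc _ x y, h, mul_add, mul_smul_comm, ← mul_assoc _ y x, ← pow_succ,
      mul_assoc z, ← pow_succ, smul_add, smul_smul, hc (n+1),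
      Finset.sum_range_succ (fun i => q ^ i) (n + 1)]
    module

end AuxComm


lemma my_mem_center {K : Type*} [Field K] {q1 q2 lam : K} {a : Weyl2 K q1 q2 lam}
    (h : ∀ i : Fin 4,
      RingQuot.mkAlgHom K (Weyl2Rel K q1 q2 lam) (FreeAlgebra.ι K i) * a =
        a * RingQuot.mkAlgHom K (Weyl2Rel K q1 q2 lam) (FreeAlgebra.ι K i)) :
    a ∈ Subalgebra.center K (Weyl2 K q1 q2 lam) := by
  rw [Subalgebra.mem_center_iff]
  intro b
  obtain ⟨b, rfl⟩ := RingQuot.mkAlgHom_surjective K (Weyl2Rel K q1 q2 lam) b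
  induction b using FreeAlgebra.induction with
  | grade0 k => simp [Algebra.commutes]
  | grade1 i => exact h i
  | mul x y hx hy => rw [map_mul, mul_assoc, hy, ← mul_assoc, hx, mul_assoc]
  | add x y hx hy => rw [map_add, add_mul, hx, hy, mul_add]

/-- if `q₁, q₂, λ` have finite multiplicative orders `l₁, l₂, l₃` and
`l = lcm(l₁,l₂,l₃)`, then `x₁^l, y₁^l, x₂^l, y₂^l` are central in `A(q₁,q₂,λ)`. -/
theorem stmt_18 {K : Type*} [Field K] (q1 q2 lam : K)
    (hq10 : q1 ≠ 0) (hq11 : q1 ≠ 1) (hq20 : q2 ≠ 0) (hq21 : q2 ≠ 1) (hlam : lam ≠ 0)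
    (l1 l2 l3 : ℕ) (h1 : 0 < l1) (h2 : 0 < l2) (h3 : 0 < l3)
    (ho1 : orderOf q1 = l1) (ho2 : orderOf q2 = l2) (ho3 : orderOf lam = l3)
    (l : ℕ) (hl : l = Nat.lcm (Nat.lcm l1 l2) l3) :
    Weyl2.x1 K q1 q2 lam ^ l ∈ Subalgebra.center K (Weyl2 K q1 q2 lam) ∧
      Weyl2.y1 K q1 q2 lam ^ l ∈ Subalgebra.center K (Weyl2 K q1 q2 lam) ∧
      Weyl2.x2 K q1 q2 lam ^ l ∈ Subalgebra.center K (Weyl2 K q1 q2 lam) ∧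
      Weyl2.y2 K q1 q2 lam ^ l ∈ Subalgebra.center K (Weyl2 K q1 q2 lam) := by
  set X1 := Weyl2.x1 K q1 q2 lam with hX1
  set Y1 := Weyl2.y1 K q1 q2 lam with hY1
  set X2 := Weyl2.x2 K q1 q2 lam with hX2
  set Y2 := Weyl2.y2 K q1 q2 lam with hY2
  -- powers of the scalars are 1
  have d1 : l1 ∣ l := hl ▸ (Nat.dvd_lcm_left l1 l2).trans (Nat.dvd_lcm_left _ l3)
  have d2 : l2 ∣ l := hl ▸ (Nat.dvd_lcm_right l1 l2).trans (Nat.dvd_lcm_left _ l3)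
  have d3 : l3 ∣ l := hl ▸ Nat.dvd_lcm_right _ l3
  have hq1l : q1 ^ l = 1 := orderOf_dvd_iff_pow_eq_one.mp (ho1 ▸ d1)
  have hq2l : q2 ^ l = 1 := orderOf_dvd_iff_pow_eq_one.mp (ho2 ▸ d2)
  have hlaml : lam ^ l = 1 := orderOf_dvd_iff_pow_eq_one.mp (ho3 ▸ d3)
  have hlpos : 0 < l := hl ▸ Nat.pos_of_ne_zero (by
    have := Nat.lcm_ne_zero (Nat.lcm_ne_zero h1.ne' h2.ne') h3.ne'
    simpa using this)
  obtain ⟨m, hm⟩ : ∃ m, l = m + 1 := ⟨l - 1, (Nat.succ_pred_eq_of_pos hlpos).symm⟩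
  have hA : (q1 * lam) ^ l = 1 := by rw [mul_pow, hq1l, hlaml, one_mul]
  have hB : (lam⁻¹) ^ l = 1 := by rw [inv_pow, hlaml, inv_one]
  have hC : (q1⁻¹ * lam⁻¹) ^ l = 1 := by
    rw [mul_pow, inv_pow, inv_pow, hq1l, hlaml, inv_one, one_mul]
  have hs1 : (∑ i ∈ Finset.range l, q1 ^ i) = 0 := by
    rw [geom_sum_eq hq11, hq1l, sub_self, zero_div]
  have hs2 : (∑ i ∈ Finset.range l, q2 ^ i) = 0 := by
    rw [geom_sum_eq hq21, hq2l, sub_self, zero_div]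
  -- relations in the quotient
  have R1 : X1 * X2 = (q1 * lam) • (X2 * X1) := by
    have := RingQuot.mkAlgHom_rel K (Weyl2Rel.r1 (K := K) (q1 := q1) (q2 := q2) (lam := lam))
    simpa only [map_mul, map_smul] using this
  have R2 : X1 * Y2 = lam⁻¹ • (Y2 * X1) := by
    have := RingQuot.mkAlgHom_rel K (Weyl2Rel.r2 (K := K) (q1 := q1) (q2 := q2) (lam := lam))
    simpa only [map_mul, map_smul] using this
  have R3 : Y1 * Y2 = lam • (Y2 * Y1) := by
    have := RingQuot.mkAlgHom_rel K (Weyl2Rel.r3 (K := K) (q1 := q1) (q2 := q2) (lam := lam))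
    simpa only [map_mul, map_smul] using this
  have R4 : Y1 * X2 = (q1⁻¹ * lam⁻¹) • (X2 * Y1) := by
    have := RingQuot.mkAlgHom_rel K (Weyl2Rel.r4 (K := K) (q1 := q1) (q2 := q2) (lam := lam))
    simpa only [map_mul, map_smul] using this
  have R5 : X1 * Y1 = q1 • (Y1 * X1) + 1 := by
    have := RingQuot.mkAlgHom_rel K (Weyl2Rel.r5 (K := K) (q1 := q1) (q2 := q2) (lam := lam))
    simp only [map_sub, map_mul, map_smul, map_one] at this
    linear_combination (norm := noncomm_ring) this
  set Z : Weyl2 K q1 q2 lam := 1 + (q1 - 1) • (Y1 * X1) with hZ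
  have R6 : X2 * Y2 = q2 • (Y2 * X2) + Z := by
    have := RingQuot.mkAlgHom_rel K (Weyl2Rel.r6 (K := K) (q1 := q1) (q2 := q2) (lam := lam))
    simp only [map_sub, map_mul, map_smul, map_add, map_one] at this
    rw [hZ]
    linear_combination (norm := noncomm_ring) this
  -- Z commutes with X2 and Y2
  have key1 : Y1 * X1 * X2 = X2 * (Y1 * X1) := by
    calc Y1 * X1 * X2 = Y1 * (X1 * X2) := by rw [mul_assoc]
      _ = (q1 * lam) • (Y1 * X2 * X1) := by rw [R1, mul_smul_comm, mul_assoc]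
      _ = ((q1 * lam) * (q1⁻¹ * lam⁻¹)) • (X2 * (Y1 * X1)) := by
          rw [R4, smul_mul_assoc, smul_smul, mul_assoc X2 Y1 X1]
      _ = X2 * (Y1 * X1) := by
          have : (q1 * lam) * (q1⁻¹ * lam⁻¹) = 1 := by field_simp
          rw [this, one_smul]
  have key2 : Y1 * X1 * Y2 = Y2 * (Y1 * X1) := by
    calc Y1 * X1 * Y2 = Y1 * (X1 * Y2) := by rw [mul_assoc]
      _ = lam⁻¹ • (Y1 * Y2 * X1) := by rw [R2, mul_smul_comm, mul_assoc]
      _ = (lam⁻¹ * lam) • (Y2 * (Y1 * X1)) := by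
          rw [R3, smul_mul_assoc, smul_smul, mul_assoc Y2 Y1 X1]
      _ = Y2 * (Y1 * X1) := by rw [inv_mul_cancel₀ hlam, one_smul]
  have hZX2 : Z * X2 = X2 * Z := by
    rw [hZ, add_mul, mul_add, one_mul, mul_one, smul_mul_assoc, mul_smul_comm, key1]
  have hZY2 : Z * Y2 = Y2 * Z := by
    rw [hZ, add_mul, mul_add, one_mul, mul_one, smul_mul_assoc, mul_smul_comm, key2]
  have honeX1 : (1 : Weyl2 K q1 q2 lam) * X1 = X1 * 1 := by rw [one_mul, mul_one]
  have honeY1 : (1 : Weyl2 K q1 q2 lam) * Y1 = Y1 * 1 := by rw [one_mul, mul_one]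
  have R5' : X1 * Y1 = q1 • (Y1 * X1) + 1 := R5
  refine ⟨my_mem_center ?_, my_mem_center ?_, my_mem_center ?_, my_mem_center ?_⟩
  · intro i
    fin_cases i
    · exact ((Commute.refl X1).pow_right l).eq
    · show Y1 * X1 ^ l = X1 ^ l * Y1
      symm
      rw [hm, my_qweyl_left R5' honeX1 m, ← hm, hq1l, hs1, one_smul, zero_smul, add_zero]
    · show X2 * X1 ^ l = X1 ^ l * X2
      symm
      rw [my_pow_left_scomm R1 l, hA, one_smul]
    · show Y2 * X1 ^ l = X1 ^ l * Y2
      symm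
      rw [my_pow_left_scomm R2 l, hB, one_smul]
  · intro i
    fin_cases i
    · show X1 * Y1 ^ l = Y1 ^ l * X1
      rw [hm, my_qweyl_right R5' honeY1 m, ← hm, hq1l, hs1, one_smul, zero_smul, add_zero]
    · exact ((Commute.refl Y1).pow_right l).eq
    · show X2 * Y1 ^ l = Y1 ^ l * X2
      symm
      rw [my_pow_left_scomm R4 l, hC, one_smul]
    · show Y2 * Y1 ^ l = Y1 ^ l * Y2
      symm
      rw [my_pow_left_scomm R3 l, hlaml, one_smul]
  · intro i
    fin_cases i
    · show X1 * X2 ^ l = X2 ^ l * X1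
      rw [my_pow_right_scomm R1 l, hA, one_smul]
    · show Y1 * X2 ^ l = X2 ^ l * Y1
      rw [my_pow_right_scomm R4 l, hC, one_smul]
    · exact ((Commute.refl X2).pow_right l).eq
    · show Y2 * X2 ^ l = X2 ^ l * Y2
      symm
      rw [hm, my_qweyl_left R6 hZX2 m, ← hm, hq2l, hs2, one_smul, zero_smul, add_zero]
  · intro i
    fin_cases i
    · show X1 * Y2 ^ l = Y2 ^ l * X1
      rw [my_pow_right_scomm R2 l, hB, one_smul]
    · show Y1 * Y2 ^ l = Y2 ^ l * Y1
      rw [my_pow_right_scomm R3 l, hlaml, one_smul]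
    · show X2 * Y2 ^ l = Y2 ^ l * X2
      rw [hm, my_qweyl_right R6 hZY2 m, ← hm, hq2l, hs2, one_smul, zero_smul, add_zero]
    · exact ((Commute.refl Y2).pow_right l).eq
end

section
/- Let K be an algebraically closed field, q1, q2 primitive l1-th and l2-th roots of unity (l1, l2 ≥ 2), λ a primitive l3-th root of unity, and L3 = l3/gcd(l3, l1*l2). For μ = (μ1, μ2, μ3, μ4) ∈ (K*)^4, the K-vector space V with basis e(a1,a2), 0 ≤ a1 ≤ l1·L3 - 1, 0 ≤ a2 ≤ l2 - 1, equipped with the action: e(a1,a2)x1 = μ1 e(a1+1, a2) (indices cyclic, with twist λ^{-a2 l1 L3} when wrapping), e(a1,a2)x2 = μ2 (q1λ)^{a1} e(a1, a2+1) (cyclic in a2), e(a1,a2)y1 = μ1^{-1}((q1^{a1}μ3 - 1)/(q1-1)) e(a1-1,a2) (with twist λ^{a2 l1 L3} when a1 = 0), e(a1,a2)y2 = μ2^{-1}λ^{-a1}((q2^{a2}μ4 - μ3)/(q2-1)) e(a1, a2-1) (cyclic), defines an A(q1,q2,λ)-module on which z1 acts by e(a1,a2) ↦ μ3 q1^{a1}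 e(a1,a2) and z2 by e(a1,a2) ↦ μ4 q1^{a1} q2^{a2} e(a1,a2). -/
/-!
Every generator acts by a weighted permutation of the basis: `x₁, y₁` shift `a₁` cyclically up
and down, `x₂, y₂` shift `a₂`. Products of weighted permutations are weighted permutations, and the
shifts commute, so each defining relation reduces to an identity between weights at one basis
vector. Away from the wrap-around `a₁ = l₁L₃ - 1 → 0` these are the identities of the generic
module on `ℤ²`; at the wrap-around the twists `λ^{∓a₂l₁L₃}` absorb the factor
`(q₁λ)^{l₁L₃} = λ^{l₁L₃}`. Writing `ρ = λ^{l₁L₃}`, the twists only depend on `a₂` mod `l₂`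
because `ρ^{l₂} = 1`, which holds as `l₁l₂L₃ = lcm(l₁l₂, l₃)`. Finally `x₁y₁`, `y₁x₁`, `x₂y₂`,
`y₂x₂` are diagonal, which gives the last two relations and the action of `z₁, z₂`.
-/

open Matrix

section WeightedPerm

variable {ι R : Type*} [DecidableEq ι] [CommSemiring R]

def weightedPerm (σ : Equiv.Perm ι) (c : ι → R) : Matrix ι ι R :=
  of fun b a => if b = σ a then c a else 0

theorem weightedPerm_mul [Fintype ι] (σ τ : Equiv.Perm ι) (c d : ι → R) :
    weightedPerm σ c * weightedPerm τ d = weightedPerm (σ * τ) fun a => c (τ a) * d a := by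
  ext b a
  simp only [weightedPerm, mul_apply, of_apply, ite_mul, zero_mul, mul_ite, mul_zero,
    Finset.sum_ite_eq', Finset.mem_univ, if_true, Equiv.Perm.mul_apply]
  congr

theorem smul_weightedPerm (k : R) (σ : Equiv.Perm ι) (c : ι → R) :
    k • weightedPerm σ c = weightedPerm σ (k • c) := by
  ext b a
  simp [weightedPerm]

theorem weightedPerm_one (c : ι → R) : weightedPerm 1 c = diagonal c := by
  ext b a
  simp only [weightedPerm, diagonal, of_apply, Equiv.Perm.one_apply]
  split_ifs with h <;> simp [h]

end WeightedPerm

theorem val_finRotate {n : ℕ} (i : Fin n) : (finRotate n i : ℕ) = (i + 1) % n := by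
  have := i.neZero
  rw [finRotate_apply, Fin.val_add, Fin.val_one', Nat.add_mod_mod]

theorem val_finRotate_symm {n : ℕ} (i : Fin n) :
    ((finRotate n).symm i : ℕ) = (i + (n - 1)) % n := by
  have h := val_finRotate ((finRotate n).symm i)
  rw [Equiv.apply_symm_apply] at h
  have hk := ((finRotate n).symm i).isLt
  rw [h, Nat.mod_add_mod, Nat.add_assoc, show 1 + (n - 1) = n by omega, Nat.add_mod_right,
    Nat.mod_eq_of_lt hk]

theorem val_finRotate_of_ne {n : ℕ} {i : Fin n} (h : (i : ℕ) ≠ n - 1) :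
    (finRotate n i : ℕ) = i + 1 := by
  rw [val_finRotate, Nat.mod_eq_of_lt (by omega)]

theorem val_finRotate_of_eq {n : ℕ} {i : Fin n} (h : (i : ℕ) = n - 1) :
    (finRotate n i : ℕ) = 0 := by
  rw [val_finRotate, h, Nat.sub_add_cancel (by omega), Nat.mod_self]

theorem pow_val_finRotate {M : Type*} [Monoid M] {x : M} {n : ℕ} (hx : x ^ n = 1) (i : Fin n) :
    x ^ (finRotate n i : ℕ) = x ^ (i : ℕ) * x := by
  rw [val_finRotate, ← pow_eq_pow_mod _ hx, pow_succ]

theorem pow_val_mul_self_of_eq {M : Type*} [Monoid M] (x : M) {n : ℕ} {i : Fin n}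
    (h : (i : ℕ) = n - 1) : x ^ (i : ℕ) * x = x ^ n := by
  rw [← pow_succ, h, Nat.sub_add_cancel (by omega)]

theorem pow_val_finRotate_symm {M : Type*} [Monoid M] {x : M} {n : ℕ} (hx : x ^ n = 1)
    (i : Fin n) : x ^ (i : ℕ) = x ^ ((finRotate n).symm i : ℕ) * x := by
  rw [← pow_val_finRotate hx, Equiv.apply_symm_apply]

theorem toLinAlgEquiv'_diagonal_single {ι R : Type*} [Fintype ι] [DecidableEq ι]
    [CommSemiring R] (d : ι → R) (a : ι) :
    toLinAlgEquiv' (diagonal d) (Pi.single a 1) = d a • Pi.single a 1 := by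
  rw [toLinAlgEquiv'_apply, diagonal_mulVec_single, ← Pi.single_smul, smul_eq_mul, mul_one]

section Shifts

variable {N l : ℕ}

def shiftFst : Equiv.Perm (Fin N × Fin l) := (finRotate N).prodCongr (Equiv.refl _)

def shiftSnd : Equiv.Perm (Fin N × Fin l) := (Equiv.refl _).prodCongr (finRotate l)

@[simp] theorem shiftFst_apply (a : Fin N × Fin l) : shiftFst a = (finRotate N a.1, a.2) := rfl

@[simp] theorem shiftSnd_apply (a : Fin N × Fin l) : shiftSnd a = (a.1, finRotate l a.2) := rfl

@[simp] theorem shiftFst_inv_apply (a : Fin N × Fin l) :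
    shiftFst⁻¹ a = ((finRotate N).symm a.1, a.2) := rfl

@[simp] theorem shiftSnd_inv_apply (a : Fin N × Fin l) :
    shiftSnd⁻¹ a = (a.1, (finRotate l).symm a.2) := rfl

theorem commute_shiftFst_shiftSnd : Commute (shiftFst : Equiv.Perm (Fin N × Fin l)) shiftSnd :=
  Equiv.ext fun _ => rfl

end Shifts

namespace TypeOneModule

variable {K : Type*} [Field K] (q1 q2 lam μ1 μ2 μ3 μ4 : K) {N l : ℕ}

def x1Weight (a : Fin N × Fin l) : K :=
  if (a.1 : ℕ) = N - 1 then μ1 * ((lam ^ N) ^ (a.2 : ℕ))⁻¹ else μ1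

def x2Weight (a : Fin N × Fin l) : K := μ2 * (q1 * lam) ^ (a.1 : ℕ)

def y1Weight (a : Fin N × Fin l) : K :=
  μ1⁻¹ * ((q1 ^ (a.1 : ℕ) * μ3 - 1) / (q1 - 1)) *
    if (a.1 : ℕ) = 0 then (lam ^ N) ^ (a.2 : ℕ) else 1

def y2Weight (a : Fin N × Fin l) : K :=
  μ2⁻¹ * (lam ^ (a.1 : ℕ))⁻¹ * ((q2 ^ (a.2 : ℕ) * μ4 - μ3) / (q2 - 1))

variable {q1 q2 lam μ1 μ2 μ3 μ4}

theorem x1Weight_mul_y1Weight_shiftFst (hlam : lam ≠ 0) (hμ1 : μ1 ≠ 0) (a : Fin N × Fin l) :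
    x1Weight lam μ1 a * y1Weight q1 lam μ1 μ3 (shiftFst a) =
      (q1 ^ (finRotate N a.1 : ℕ) * μ3 - 1) / (q1 - 1) := by
  obtain ⟨i, j⟩ := a
  dsimp only [x1Weight, y1Weight, shiftFst_apply]
  rcases eq_or_ne (i : ℕ) (N - 1) with h | h
  · rw [if_pos h, val_finRotate_of_eq h, if_pos rfl]
    field_simp
  · rw [if_neg h, val_finRotate_of_ne h, if_neg (Nat.succ_ne_zero _)]
    field_simp

theorem x2Weight_mul_y2Weight_shiftSnd (hlam : lam ≠ 0) (hμ2 : μ2 ≠ 0) (a : Fin N × Fin l) :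
    x2Weight q1 lam μ2 a * y2Weight q2 lam μ2 μ3 μ4 (shiftSnd a) =
      q1 ^ (a.1 : ℕ) * ((q2 ^ (finRotate l a.2 : ℕ) * μ4 - μ3) / (q2 - 1)) := by
  simp only [x2Weight, y2Weight, shiftSnd_apply, mul_pow]
  field_simp

theorem x2Weight_shiftFst_mul_x1Weight (hq1N : q1 ^ N = 1) (hρ : (lam ^ N) ^ l = 1)
    (hlam : lam ≠ 0) (a : Fin N × Fin l) :
    x2Weight q1 lam μ2 (shiftFst a) * x1Weight lam μ1 a =
      q1 * lam * (x1Weight lam μ1 (shiftSnd a) * x2Weight q1 lam μ2 a) := by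
  obtain ⟨i, j⟩ := a
  dsimp only [x1Weight, x2Weight, shiftFst_apply, shiftSnd_apply]
  rcases eq_or_ne (i : ℕ) (N - 1) with h | h
  · have hwrap : (q1 * lam) ^ (i : ℕ) * (q1 * lam) = lam ^ N := by
      rw [pow_val_mul_self_of_eq _ h, mul_pow, hq1N, one_mul]
    rw [if_pos h, if_pos h, val_finRotate_of_eq h, pow_val_finRotate hρ]
    field_simp
    linear_combination -(μ1 * μ2) * hwrap
  · rw [if_neg h, if_neg h, val_finRotate_of_ne h]
    ring

theorem y2Weight_shiftFst_mul_x1Weight (hρ : (lam ^ N) ^ l = 1) (hlam : lam ≠ 0)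
    (a : Fin N × Fin l) :
    y2Weight q2 lam μ2 μ3 μ4 (shiftFst a) * x1Weight lam μ1 a =
      lam⁻¹ * (x1Weight lam μ1 (shiftSnd⁻¹ a) * y2Weight q2 lam μ2 μ3 μ4 a) := by
  obtain ⟨i, j⟩ := a
  dsimp only [x1Weight, y2Weight, shiftFst_apply, shiftSnd_inv_apply]
  -- the factors common to both sides become atoms, so `field_simp` leaves their denominators alone
  generalize μ2⁻¹ = m
  generalize (q2 ^ (j : ℕ) * μ4 - μ3) / (q2 - 1) = c
  rcases eq_or_ne (i : ℕ) (N - 1) with h | h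
  · have hwrap := pow_val_mul_self_of_eq lam h
    rw [if_pos h, if_pos h, val_finRotate_of_eq h, pow_val_finRotate_symm hρ j]
    field_simp
    linear_combination μ1 * m * c * hwrap
  · rw [if_neg h, if_neg h, val_finRotate_of_ne h]
    field_simp
    ring

theorem y2Weight_shiftFst_inv_mul_y1Weight (hρ : (lam ^ N) ^ l = 1) (hlam : lam ≠ 0)
    (a : Fin N × Fin l) :
    y2Weight q2 lam μ2 μ3 μ4 (shiftFst⁻¹ a) * y1Weight q1 lam μ1 μ3 a =
      lam * (y1Weight q1 lam μ1 μ3 (shiftSnd⁻¹ a) * y2Weight q2 lam μ2 μ3 μ4 a) := by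
  -- writing `a = shiftFst b` keeps the case split on the wrap-around free of `a₁ - 1`
  obtain ⟨⟨i, j⟩, rfl⟩ := shiftFst.surjective a
  dsimp only [y1Weight, y2Weight, shiftFst_apply, shiftFst_inv_apply, shiftSnd_inv_apply]
  rw [Equiv.symm_apply_apply]
  generalize μ1⁻¹ = m1
  generalize μ2⁻¹ = m2
  generalize (q2 ^ (j : ℕ) * μ4 - μ3) / (q2 - 1) = c2
  generalize (q1 ^ (finRotate N i : ℕ) * μ3 - 1) / (q1 - 1) = c1
  rcases eq_or_ne (i : ℕ) (N - 1) with h | h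
  · have hwrap := pow_val_mul_self_of_eq lam h
    rw [val_finRotate_of_eq h, if_pos rfl, if_pos rfl, pow_val_finRotate_symm hρ j]
    field_simp
    linear_combination -(m1 * m2 * c1 * c2) * hwrap
  · rw [val_finRotate_of_ne h, if_neg (Nat.succ_ne_zero _), if_neg (Nat.succ_ne_zero _)]
    field_simp
    ring

theorem x2Weight_shiftFst_inv_mul_y1Weight (hq1N : q1 ^ N = 1) (hρ : (lam ^ N) ^ l = 1)
    (hlam : lam ≠ 0) (hq10 : q1 ≠ 0) (a : Fin N × Fin l) :
    x2Weight q1 lam μ2 (shiftFst⁻¹ a) * y1Weight q1 lam μ1 μ3 a =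
      q1⁻¹ * lam⁻¹ * (y1Weight q1 lam μ1 μ3 (shiftSnd a) * x2Weight q1 lam μ2 a) := by
  obtain ⟨⟨i, j⟩, rfl⟩ := shiftFst.surjective a
  dsimp only [x2Weight, y1Weight, shiftFst_apply, shiftFst_inv_apply, shiftSnd_apply]
  rw [Equiv.symm_apply_apply]
  generalize μ1⁻¹ = m1
  generalize (q1 ^ (finRotate N i : ℕ) * μ3 - 1) / (q1 - 1) = c1
  rcases eq_or_ne (i : ℕ) (N - 1) with h | h
  · have hwrap : (q1 * lam) ^ (i : ℕ) * (q1 * lam) = lam ^ N := by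
      rw [pow_val_mul_self_of_eq _ h, mul_pow, hq1N, one_mul]
    rw [val_finRotate_of_eq h, if_pos rfl, if_pos rfl, pow_val_finRotate hρ j]
    field_simp
    linear_combination μ2 * m1 * c1 * hwrap
  · rw [val_finRotate_of_ne h, if_neg (Nat.succ_ne_zero _), if_neg (Nat.succ_ne_zero _)]
    field_simp
    ring

variable (q1 q2 lam μ1 μ2 μ3 μ4 N l)

def x1Op : Module.End K (Fin N × Fin l → K) := toLin' <| of fun b a : Fin N × Fin l =>
  if (b.1 : ℕ) = ((a.1 : ℕ) + 1) % N ∧ b.2 = a.2 then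
    (if (a.1 : ℕ) = N - 1 then μ1 * lam ^ (-(((a.2 : ℕ) * N : ℕ) : ℤ)) else μ1)
  else 0

def x2Op : Module.End K (Fin N × Fin l → K) := toLin' <| of fun b a : Fin N × Fin l =>
  if b.1 = a.1 ∧ (b.2 : ℕ) = ((a.2 : ℕ) + 1) % l then μ2 * (q1 * lam) ^ (a.1 : ℕ) else 0

def y1Op : Module.End K (Fin N × Fin l → K) := toLin' <| of fun b a : Fin N × Fin l =>
  if (b.1 : ℕ) = ((a.1 : ℕ) + (N - 1)) % N ∧ b.2 = a.2 then
    μ1⁻¹ * ((q1 ^ (a.1 : ℕ) * μ3 - 1) / (q1 - 1)) *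
      (if (a.1 : ℕ) = 0 then lam ^ ((a.2 : ℕ) * N) else 1)
  else 0

def y2Op : Module.End K (Fin N × Fin l → K) := toLin' <| of fun b a : Fin N × Fin l =>
  if b.1 = a.1 ∧ (b.2 : ℕ) = ((a.2 : ℕ) + (l - 1)) % l then
    μ2⁻¹ * lam ^ (-((a.1 : ℕ) : ℤ)) * ((q2 ^ (a.2 : ℕ) * μ4 - μ3) / (q2 - 1))
  else 0

variable {q1 q2 lam μ1 μ2 μ3 μ4 N l}

theorem x1Op_eq :
    x1Op lam μ1 N l = toLinAlgEquiv' (weightedPerm shiftFst (x1Weight lam μ1)) := by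
  refine congrArg toLin' (ext fun b a => ?_)
  simp only [weightedPerm, x1Weight, of_apply, shiftFst_apply, Prod.ext_iff, Fin.ext_iff,
    val_finRotate, _root_.zpow_neg, zpow_natCast, pow_mul']

theorem x2Op_eq :
    x2Op q1 lam μ2 N l = toLinAlgEquiv' (weightedPerm shiftSnd (x2Weight q1 lam μ2)) := by
  refine congrArg toLin' (ext fun b a => ?_)
  simp only [weightedPerm, x2Weight, of_apply, shiftSnd_apply, Prod.ext_iff, Fin.ext_iff,
    val_finRotate]

theorem y1Op_eq :
    y1Op q1 lam μ1 μ3 N l =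
      toLinAlgEquiv' (weightedPerm shiftFst⁻¹ (y1Weight q1 lam μ1 μ3)) := by
  refine congrArg toLin' (ext fun b a => ?_)
  simp only [weightedPerm, y1Weight, of_apply, shiftFst_inv_apply, Prod.ext_iff, Fin.ext_iff,
    val_finRotate_symm, pow_mul']

theorem y2Op_eq :
    y2Op q2 lam μ2 μ3 μ4 N l =
      toLinAlgEquiv' (weightedPerm shiftSnd⁻¹ (y2Weight q2 lam μ2 μ3 μ4)) := by
  refine congrArg toLin' (ext fun b a => ?_)
  simp only [weightedPerm, y2Weight, of_apply, shiftSnd_inv_apply, Prod.ext_iff, Fin.ext_iff,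
    val_finRotate_symm, _root_.zpow_neg, zpow_natCast]

theorem x2Op_mul_x1Op (hq1N : q1 ^ N = 1) (hρ : (lam ^ N) ^ l = 1) (hlam : lam ≠ 0) :
    x2Op q1 lam μ2 N l * x1Op lam μ1 N l =
      (q1 * lam) • (x1Op lam μ1 N l * x2Op q1 lam μ2 N l) := by
  rw [x1Op_eq, x2Op_eq, ← map_mul, ← map_mul, ← map_smul, weightedPerm_mul, weightedPerm_mul,
    smul_weightedPerm, commute_shiftFst_shiftSnd.eq]
  exact congrArg _ (congrArg _ (funext (x2Weight_shiftFst_mul_x1Weight hq1N hρ hlam)))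

theorem y2Op_mul_x1Op (hρ : (lam ^ N) ^ l = 1) (hlam : lam ≠ 0) :
    y2Op q2 lam μ2 μ3 μ4 N l * x1Op lam μ1 N l =
      lam⁻¹ • (x1Op lam μ1 N l * y2Op q2 lam μ2 μ3 μ4 N l) := by
  rw [x1Op_eq, y2Op_eq, ← map_mul, ← map_mul, ← map_smul, weightedPerm_mul, weightedPerm_mul,
    smul_weightedPerm, commute_shiftFst_shiftSnd.inv_right.eq]
  exact congrArg _ (congrArg _ (funext (y2Weight_shiftFst_mul_x1Weight hρ hlam)))

theorem y2Op_mul_y1Op (hρ : (lam ^ N) ^ l = 1) (hlam : lam ≠ 0) :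
    y2Op q2 lam μ2 μ3 μ4 N l * y1Op q1 lam μ1 μ3 N l =
      lam • (y1Op q1 lam μ1 μ3 N l * y2Op q2 lam μ2 μ3 μ4 N l) := by
  rw [y1Op_eq, y2Op_eq, ← map_mul, ← map_mul, ← map_smul, weightedPerm_mul, weightedPerm_mul,
    smul_weightedPerm, commute_shiftFst_shiftSnd.inv_inv.eq]
  exact congrArg _ (congrArg _ (funext (y2Weight_shiftFst_inv_mul_y1Weight hρ hlam)))

theorem x2Op_mul_y1Op (hq1N : q1 ^ N = 1) (hρ : (lam ^ N) ^ l = 1) (hlam : lam ≠ 0)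
    (hq10 : q1 ≠ 0) :
    x2Op q1 lam μ2 N l * y1Op q1 lam μ1 μ3 N l =
      (q1⁻¹ * lam⁻¹) • (y1Op q1 lam μ1 μ3 N l * x2Op q1 lam μ2 N l) := by
  rw [x2Op_eq, y1Op_eq, ← map_mul, ← map_mul, ← map_smul, weightedPerm_mul, weightedPerm_mul,
    smul_weightedPerm, commute_shiftFst_shiftSnd.inv_left.eq]
  exact congrArg _ (congrArg _
    (funext (x2Weight_shiftFst_inv_mul_y1Weight hq1N hρ hlam hq10)))

theorem x1Op_mul_y1Op (hlam : lam ≠ 0) (hμ1 : μ1 ≠ 0) :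
    x1Op lam μ1 N l * y1Op q1 lam μ1 μ3 N l =
      toLinAlgEquiv' (diagonal fun a => (q1 ^ (a.1 : ℕ) * μ3 - 1) / (q1 - 1)) := by
  rw [x1Op_eq, y1Op_eq, ← map_mul, weightedPerm_mul, mul_inv_cancel, weightedPerm_one]
  refine congrArg _ (congrArg _ (funext fun a => ?_))
  obtain ⟨b, rfl⟩ := shiftFst.surjective a
  simp only [Equiv.Perm.coe_inv, Equiv.symm_apply_apply]
  exact x1Weight_mul_y1Weight_shiftFst hlam hμ1 b

theorem y1Op_mul_x1Op (hlam : lam ≠ 0) (hμ1 : μ1 ≠ 0) :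
    y1Op q1 lam μ1 μ3 N l * x1Op lam μ1 N l =
      toLinAlgEquiv' (diagonal fun a => (q1 ^ (finRotate N a.1 : ℕ) * μ3 - 1) / (q1 - 1)) := by
  rw [x1Op_eq, y1Op_eq, ← map_mul, weightedPerm_mul, inv_mul_cancel, weightedPerm_one]
  refine congrArg _ (congrArg _ (funext fun a => ?_))
  rw [mul_comm]
  exact x1Weight_mul_y1Weight_shiftFst hlam hμ1 a

theorem x2Op_mul_y2Op (hlam : lam ≠ 0) (hμ2 : μ2 ≠ 0) :
    x2Op q1 lam μ2 N l * y2Op q2 lam μ2 μ3 μ4 N l =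
      toLinAlgEquiv' (diagonal fun a =>
        q1 ^ (a.1 : ℕ) * ((q2 ^ (a.2 : ℕ) * μ4 - μ3) / (q2 - 1))) := by
  rw [x2Op_eq, y2Op_eq, ← map_mul, weightedPerm_mul, mul_inv_cancel, weightedPerm_one]
  refine congrArg _ (congrArg _ (funext fun a => ?_))
  obtain ⟨b, rfl⟩ := shiftSnd.surjective a
  simp only [Equiv.Perm.coe_inv, Equiv.symm_apply_apply]
  exact x2Weight_mul_y2Weight_shiftSnd hlam hμ2 b

theorem y2Op_mul_x2Op (hlam : lam ≠ 0) (hμ2 : μ2 ≠ 0) :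
    y2Op q2 lam μ2 μ3 μ4 N l * x2Op q1 lam μ2 N l =
      toLinAlgEquiv' (diagonal fun a =>
        q1 ^ (a.1 : ℕ) * ((q2 ^ (finRotate l a.2 : ℕ) * μ4 - μ3) / (q2 - 1))) := by
  rw [x2Op_eq, y2Op_eq, ← map_mul, weightedPerm_mul, inv_mul_cancel, weightedPerm_one]
  refine congrArg _ (congrArg _ (funext fun a => ?_))
  rw [mul_comm]
  exact x2Weight_mul_y2Weight_shiftSnd hlam hμ2 a

variable (q1 lam μ1 μ3 N l) in
def z1Op : Module.End K (Fin N × Fin l → K) :=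
  1 + (q1 - 1) • (x1Op lam μ1 N l * y1Op q1 lam μ1 μ3 N l)

variable (q1 q2 lam μ1 μ2 μ3 μ4 N l) in
def z2Op : Module.End K (Fin N × Fin l → K) :=
  z1Op q1 lam μ1 μ3 N l + (q2 - 1) • (x2Op q1 lam μ2 N l * y2Op q2 lam μ2 μ3 μ4 N l)

theorem z1Op_eq (hq1 : q1 ≠ 1) (hlam : lam ≠ 0) (hμ1 : μ1 ≠ 0) :
    z1Op q1 lam μ1 μ3 N l = toLinAlgEquiv' (diagonal fun a => μ3 * q1 ^ (a.1 : ℕ)) := by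
  have hq1' : q1 - 1 ≠ 0 := sub_ne_zero.mpr hq1
  rw [z1Op, x1Op_mul_y1Op hlam hμ1, ← map_one toLinAlgEquiv', ← map_smul, ← map_add,
    ← diagonal_one, ← diagonal_smul, diagonal_add]
  refine congrArg _ (congrArg _ (funext fun a => ?_))
  simp only [Pi.smul_apply, smul_eq_mul]
  field_simp
  ring

theorem z2Op_eq (hq1 : q1 ≠ 1) (hq2 : q2 ≠ 1) (hlam : lam ≠ 0) (hμ1 : μ1 ≠ 0)
    (hμ2 : μ2 ≠ 0) :
    z2Op q1 q2 lam μ1 μ2 μ3 μ4 N l =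
      toLinAlgEquiv' (diagonal fun a => μ4 * q1 ^ (a.1 : ℕ) * q2 ^ (a.2 : ℕ)) := by
  have hq2' : q2 - 1 ≠ 0 := sub_ne_zero.mpr hq2
  rw [z2Op, z1Op_eq hq1 hlam hμ1, x2Op_mul_y2Op hlam hμ2, ← map_smul, ← map_add,
    ← diagonal_smul, diagonal_add]
  refine congrArg _ (congrArg _ (funext fun a => ?_))
  simp only [Pi.smul_apply, smul_eq_mul]
  field_simp
  ring

theorem y1Op_mul_x1Op_sub_smul (hq1N : q1 ^ N = 1) (hq1 : q1 ≠ 1) (hlam : lam ≠ 0)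
    (hμ1 : μ1 ≠ 0) :
    y1Op q1 lam μ1 μ3 N l * x1Op lam μ1 N l -
      q1 • (x1Op lam μ1 N l * y1Op q1 lam μ1 μ3 N l) = 1 := by
  have hq1' : q1 - 1 ≠ 0 := sub_ne_zero.mpr hq1
  rw [x1Op_mul_y1Op hlam hμ1, y1Op_mul_x1Op hlam hμ1, ← map_smul, ← map_sub, ← diagonal_smul,
    diagonal_sub, ← map_one toLinAlgEquiv', ← diagonal_one]
  refine congrArg _ (congrArg _ (funext fun a => ?_))
  simp only [Pi.smul_apply, smul_eq_mul, pow_val_finRotate hq1N]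
  field_simp
  ring

theorem y2Op_mul_x2Op_sub_smul (hq2l : q2 ^ l = 1) (hq1 : q1 ≠ 1) (hq2 : q2 ≠ 1)
    (hlam : lam ≠ 0) (hμ1 : μ1 ≠ 0) (hμ2 : μ2 ≠ 0) :
    y2Op q2 lam μ2 μ3 μ4 N l * x2Op q1 lam μ2 N l -
        q2 • (x2Op q1 lam μ2 N l * y2Op q2 lam μ2 μ3 μ4 N l) =
      z1Op q1 lam μ1 μ3 N l := by
  have hq2' : q2 - 1 ≠ 0 := sub_ne_zero.mpr hq2
  rw [z1Op_eq hq1 hlam hμ1, x2Op_mul_y2Op hlam hμ2, y2Op_mul_x2Op hlam hμ2, ← map_smul,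
    ← map_sub, ← diagonal_smul, diagonal_sub]
  refine congrArg _ (congrArg _ (funext fun a => ?_))
  simp only [Pi.smul_apply, smul_eq_mul, pow_val_finRotate hq2l]
  field_simp
  ring

end TypeOneModule

open TypeOneModule

theorem stmt_19_general {K : Type*} [Field K] (q1 q2 lam : K)
    (l1 l2 l3 : ℕ) (hl1 : 2 ≤ l1) (hl2 : 2 ≤ l2) (hl3 : 0 < l3)
    (ho1 : orderOf q1 = l1) (ho2 : orderOf q2 = l2) (ho3 : orderOf lam = l3)
    (L3 : ℕ) (hL3 : L3 = l3 / Nat.gcd l3 (l1 * l2))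
    (μ1 μ2 μ3 μ4 : K) (hμ1 : μ1 ≠ 0) (hμ2 : μ2 ≠ 0) :
    -- the basis `e(a₁,a₂)` of `V₁(μ)`
    let N := l1 * L3
    let e : Fin N × Fin l2 → (Fin N × Fin l2 → K) := fun a => Pi.single a 1
    -- action of `x₁`: `e(a₁,a₂) x₁ = μ₁ e(a₁+1,a₂)` cyclically, with twist
    -- `λ^{-a₂ l₁ L₃}` when wrapping around
    let X1 : Module.End K (Fin N × Fin l2 → K) := Matrix.toLin' (Matrix.of
      fun b a : Fin N × Fin l2 =>
        if (b.1 : ℕ) = ((a.1 : ℕ) + 1) % N ∧ b.2 = a.2 then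
          (if (a.1 : ℕ) = N - 1 then μ1 * lam ^ (-(((a.2 : ℕ) * N : ℕ) : ℤ)) else μ1)
        else 0)
    -- action of `x₂`: `e(a₁,a₂) x₂ = μ₂ (q₁λ)^{a₁} e(a₁,a₂+1)` cyclically
    let X2 : Module.End K (Fin N × Fin l2 → K) := Matrix.toLin' (Matrix.of
      fun b a : Fin N × Fin l2 =>
        if b.1 = a.1 ∧ (b.2 : ℕ) = ((a.2 : ℕ) + 1) % l2 then
          μ2 * (q1 * lam) ^ (a.1 : ℕ)
        else 0)
    -- action of `y₁`: `e(a₁,a₂) y₁ = μ₁⁻¹ ((q₁^{a₁}μ₃ - 1)/(q₁-1)) e(a₁-1,a₂)`,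
    -- with twist `λ^{a₂ l₁ L₃}` when `a₁ = 0`
    let Y1 : Module.End K (Fin N × Fin l2 → K) := Matrix.toLin' (Matrix.of
      fun b a : Fin N × Fin l2 =>
        if (b.1 : ℕ) = ((a.1 : ℕ) + (N - 1)) % N ∧ b.2 = a.2 then
          μ1⁻¹ * ((q1 ^ (a.1 : ℕ) * μ3 - 1) / (q1 - 1)) *
            (if (a.1 : ℕ) = 0 then lam ^ ((a.2 : ℕ) * N) else 1)
        else 0)
    -- action of `y₂`: `e(a₁,a₂) y₂ = μ₂⁻¹ λ^{-a₁} ((q₂^{a₂}μ₄ - μ₃)/(q₂-1)) e(a₁,a₂-1)`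
    let Y2 : Module.End K (Fin N × Fin l2 → K) := Matrix.toLin' (Matrix.of
      fun b a : Fin N × Fin l2 =>
        if b.1 = a.1 ∧ (b.2 : ℕ) = ((a.2 : ℕ) + (l2 - 1)) % l2 then
          μ2⁻¹ * lam ^ (-((a.1 : ℕ) : ℤ)) * ((q2 ^ (a.2 : ℕ) * μ4 - μ3) / (q2 - 1))
        else 0)
    -- operators of the normal elements `z₁ = 1 + (q₁-1)y₁x₁`, `z₂ = z₁ + (q₂-1)y₂x₂`
    let Z1 : Module.End K (Fin N × Fin l2 → K) := 1 + (q1 - 1) • (X1 * Y1)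
    let Z2 : Module.End K (Fin N × Fin l2 → K) := Z1 + (q2 - 1) • (X2 * Y2)
    -- the six defining relations of `A(q₁,q₂,λ)` hold (right-action form) …
    (X2 * X1 = (q1 * lam) • (X1 * X2)) ∧
    (Y2 * X1 = lam⁻¹ • (X1 * Y2)) ∧
    (Y2 * Y1 = lam • (Y1 * Y2)) ∧
    (X2 * Y1 = (q1⁻¹ * lam⁻¹) • (Y1 * X2)) ∧
    (Y1 * X1 - q1 • (X1 * Y1) = 1) ∧
    (Y2 * X2 - q2 • (X2 * Y2) = 1 + (q1 - 1) • (X1 * Y1)) ∧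
    -- … so `V₁(μ)` is an `A(q₁,q₂,λ)`-module, on which `z₁, z₂` act diagonally:
    (∀ a : Fin N × Fin l2, Z1 (e a) = (μ3 * q1 ^ (a.1 : ℕ)) • e a) ∧
    (∀ a : Fin N × Fin l2, Z2 (e a) = (μ4 * q1 ^ (a.1 : ℕ) * q2 ^ (a.2 : ℕ)) • e a) := by
  intro N e X1 X2 Y1 Y2 Z1 Z2
  have hq1 : IsPrimitiveRoot q1 l1 := ho1 ▸ IsPrimitiveRoot.orderOf q1
  have hq2 : IsPrimitiveRoot q2 l2 := ho2 ▸ IsPrimitiveRoot.orderOf q2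
  have hlam : lam ≠ 0 := (ho3 ▸ IsPrimitiveRoot.orderOf lam).ne_zero hl3.ne'
  have hq1N : q1 ^ N = 1 := orderOf_dvd_iff_pow_eq_one.mp (ho1 ▸ dvd_mul_right l1 L3)
  have hρ : (lam ^ N) ^ l2 = 1 := by
    rw [← pow_mul, ← orderOf_dvd_iff_pow_eq_one, ho3, show N * l2 = l1 * l2 * L3 by ring, hL3,
      Nat.gcd_comm, ← Nat.mul_div_assoc _ (Nat.gcd_dvd_right _ _), ← Nat.lcm_eq_mul_div]
    exact Nat.dvd_lcm_right _ _
  exact ⟨x2Op_mul_x1Op hq1N hρ hlam, y2Op_mul_x1Op hρ hlam, y2Op_mul_y1Op hρ hlam,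
    x2Op_mul_y1Op hq1N hρ hlam (hq1.ne_zero (by omega)),
    y1Op_mul_x1Op_sub_smul hq1N (hq1.ne_one hl1) hlam hμ1,
    y2Op_mul_x2Op_sub_smul hq2.pow_eq_one (hq1.ne_one hl1) (hq2.ne_one hl2) hlam hμ1 hμ2,
    fun a => by
      rw [show Z1 = _ from z1Op_eq (hq1.ne_one hl1) hlam hμ1]
      exact toLinAlgEquiv'_diagonal_single _ a,
    fun a => by
      rw [show Z2 = _ from z2Op_eq (hq1.ne_one hl1) (hq2.ne_one hl2) hlam hμ1 hμ2]
      exact toLinAlgEquiv'_diagonal_single _ a⟩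

/-- the explicit Type-I module `V₁(μ)` for the second quantum Weyl
algebra `A(q₁,q₂,λ)`.  On the `K`-space with basis `e(a₁,a₂)`,
`0 ≤ a₁ ≤ l₁L₃ - 1`, `0 ≤ a₂ ≤ l₂ - 1`, the stated (right) actions of
`x₁, y₁, x₂, y₂` satisfy all six defining relations of `A(q₁,q₂,λ)` (written as
right-action operator identities, so that the operator of a product `uv` is
`op v ∘ op u`), and the normal elements `z₁ = 1 + (q₁-1)y₁x₁`,
`z₂ = z₁ + (q₂-1)y₂x₂` act diagonally by `μ₃ q₁^{a₁}` and `μ₄ q₁^{a₁} q₂^{a₂}`. -/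
theorem stmt_19 {K : Type*} [Field K] [IsAlgClosed K] (q1 q2 lam : K)
    (l1 l2 l3 : ℕ) (hl1 : 2 ≤ l1) (hl2 : 2 ≤ l2) (hl3 : 0 < l3)
    (ho1 : orderOf q1 = l1) (ho2 : orderOf q2 = l2) (ho3 : orderOf lam = l3)
    (L3 : ℕ) (hL3 : L3 = l3 / Nat.gcd l3 (l1 * l2))
    (μ1 μ2 μ3 μ4 : K) (hμ1 : μ1 ≠ 0) (hμ2 : μ2 ≠ 0) (hμ3 : μ3 ≠ 0) (hμ4 : μ4 ≠ 0) :
    -- the basis `e(a₁,a₂)` of `V₁(μ)`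
    let N := l1 * L3
    let e : Fin N × Fin l2 → (Fin N × Fin l2 → K) := fun a => Pi.single a 1
    -- action of `x₁`: `e(a₁,a₂) x₁ = μ₁ e(a₁+1,a₂)` cyclically, with twist
    -- `λ^{-a₂ l₁ L₃}` when wrapping around
    let X1 : Module.End K (Fin N × Fin l2 → K) := Matrix.toLin' (Matrix.of
      fun b a : Fin N × Fin l2 =>
        if (b.1 : ℕ) = ((a.1 : ℕ) + 1) % N ∧ b.2 = a.2 then
          (if (a.1 : ℕ) = N - 1 then μ1 * lam ^ (-(((a.2 : ℕ) * N : ℕ) : ℤ)) else μ1)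
        else 0)
    -- action of `x₂`: `e(a₁,a₂) x₂ = μ₂ (q₁λ)^{a₁} e(a₁,a₂+1)` cyclically
    let X2 : Module.End K (Fin N × Fin l2 → K) := Matrix.toLin' (Matrix.of
      fun b a : Fin N × Fin l2 =>
        if b.1 = a.1 ∧ (b.2 : ℕ) = ((a.2 : ℕ) + 1) % l2 then
          μ2 * (q1 * lam) ^ (a.1 : ℕ)
        else 0)
    -- action of `y₁`: `e(a₁,a₂) y₁ = μ₁⁻¹ ((q₁^{a₁}μ₃ - 1)/(q₁-1)) e(a₁-1,a₂)`,
    -- with twist `λ^{a₂ l₁ L₃}` when `a₁ = 0`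
    let Y1 : Module.End K (Fin N × Fin l2 → K) := Matrix.toLin' (Matrix.of
      fun b a : Fin N × Fin l2 =>
        if (b.1 : ℕ) = ((a.1 : ℕ) + (N - 1)) % N ∧ b.2 = a.2 then
          μ1⁻¹ * ((q1 ^ (a.1 : ℕ) * μ3 - 1) / (q1 - 1)) *
            (if (a.1 : ℕ) = 0 then lam ^ ((a.2 : ℕ) * N) else 1)
        else 0)
    -- action of `y₂`: `e(a₁,a₂) y₂ = μ₂⁻¹ λ^{-a₁} ((q₂^{a₂}μ₄ - μ₃)/(q₂-1)) e(a₁,a₂-1)`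
    let Y2 : Module.End K (Fin N × Fin l2 → K) := Matrix.toLin' (Matrix.of
      fun b a : Fin N × Fin l2 =>
        if b.1 = a.1 ∧ (b.2 : ℕ) = ((a.2 : ℕ) + (l2 - 1)) % l2 then
          μ2⁻¹ * lam ^ (-((a.1 : ℕ) : ℤ)) * ((q2 ^ (a.2 : ℕ) * μ4 - μ3) / (q2 - 1))
        else 0)
    -- operators of the normal elements `z₁ = 1 + (q₁-1)y₁x₁`, `z₂ = z₁ + (q₂-1)y₂x₂`
    let Z1 : Module.End K (Fin N × Fin l2 → K) := 1 + (q1 - 1) • (X1 * Y1)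
    let Z2 : Module.End K (Fin N × Fin l2 → K) := Z1 + (q2 - 1) • (X2 * Y2)
    -- the six defining relations of `A(q₁,q₂,λ)` hold (right-action form) …
    (X2 * X1 = (q1 * lam) • (X1 * X2)) ∧
    (Y2 * X1 = lam⁻¹ • (X1 * Y2)) ∧
    (Y2 * Y1 = lam • (Y1 * Y2)) ∧
    (X2 * Y1 = (q1⁻¹ * lam⁻¹) • (Y1 * X2)) ∧
    (Y1 * X1 - q1 • (X1 * Y1) = 1) ∧
    (Y2 * X2 - q2 • (X2 * Y2) = 1 + (q1 - 1) • (X1 * Y1)) ∧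
    -- … so `V₁(μ)` is an `A(q₁,q₂,λ)`-module, on which `z₁, z₂` act diagonally:
    (∀ a : Fin N × Fin l2, Z1 (e a) = (μ3 * q1 ^ (a.1 : ℕ)) • e a) ∧
    (∀ a : Fin N × Fin l2, Z2 (e a) = (μ4 * q1 ^ (a.1 : ℕ) * q2 ^ (a.2 : ℕ)) • e a) :=
  stmt_19_general q1 q2 lam l1 l2 l3 hl1 hl2 hl3 ho1 ho2 ho3 L3 hL3 μ1 μ2 μ3 μ4 hμ1 hμ2
end
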